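/- arXiv:2508.17301 — 5 statements merged into one kernel-verified Lean document; each statement's English description precedes it below -/
import Mathlib

section
/- For every η ∈ [0, 2 − 2δλ₁) and every p ∈ ℝⁿ with V(p) ≥ V(𝕡(η)), it holds that Π(p) ≤ Π(𝕡(η)); moreover Π(p) = Π(𝕡(η)) implies p = 𝕡(η). In other words, 𝕡(η) is the unique maximizer of profit subject to the consumer-surplus floor V(p) ≥ V(𝕡(η)). -/
open Matrix

noncomputable def Hmat {n : ℕ} (G : Matrix (Fin n) (Fin n) ℝ) (δ : ℝ) :
    Matrix (Fin n) (Fin n) ℝ :=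
  (1 - δ • G)⁻¹

/-- Monopolist profit Π(p) = (p − c)ᵀ H (a − p). -/
noncomputable def profit {n : ℕ} (G : Matrix (Fin n) (Fin n) ℝ) (δ : ℝ)
    (a c p : Fin n → ℝ) : ℝ :=
  (p - c) ⬝ᵥ (Hmat G δ *ᵥ (a - p))

/-- Aggregate consumer surplus V(p) = (1/2)(a − p)ᵀ H² (a − p). -/
noncomputable def surplus {n : ℕ} (G : Matrix (Fin n) (Fin n) ℝ) (δ : ℝ)
    (a p : Fin n → ℝ) : ℝ :=
  (1 / 2 : ℝ) * ((a - p) ⬝ᵥ ((Hmat G δ * Hmat G δ) *ᵥ (a - p)))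

/-- Unrestricted optimal price p^ur = (a + c)/2. -/
noncomputable def pUR {n : ℕ} (a c : Fin n → ℝ) : Fin n → ℝ :=
  (1 / 2 : ℝ) • (a + c)

/-- The Pareto price family 𝕡(η). -/
noncomputable def pFam {n : ℕ} (G : Matrix (Fin n) (Fin n) ℝ) (δ : ℝ)
    (a c : Fin n → ℝ) (η : ℝ) : Fin n → ℝ :=
  pUR a c - (η / (2 - η)) • ((1 - (2 * δ / (2 - η)) • G)⁻¹ *ᵥ ((1 / 2 : ℝ) • (a - c)))

/-! With `x = a - p` and `s = (a - c) / 2`, the Lagrangian `Π + η V` is the quadratic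
`2 ⟪H s, x⟫ - ⟪x, A x⟫` with `A = H - (η / 2) H² = H ((1 - η / 2) I - δ G) H`, and `A` is positive
definite because `δ λ₁ < 1 - η / 2`. The price `𝕡(η)` solves the first-order condition
`A (a - 𝕡(η)) = H s`, so completing the square gives
`Π(p) + η V(p) + ⟪q, A q⟫ = Π(𝕡(η)) + η V(𝕡(η))` with `q = 𝕡(η) - p`. Since `η ≥ 0` and
`V(p) ≥ V(𝕡(η))`, this bounds `Π(p)` by `Π(𝕡(η))`, strictly unless `q = 0`. -/

section QuadraticForm

variable {ι : Type*} [Fintype ι]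

theorem Matrix.IsSymm.sub_dotProduct_mulVec_sub {R : Type*} [CommRing R] {A : Matrix ι ι R}
    (hA : A.IsSymm) {b w : ι → R} (hw : A *ᵥ w = b) (x : ι → R) :
    (x - w) ⬝ᵥ (A *ᵥ (x - w)) =
      (2 * (b ⬝ᵥ w) - w ⬝ᵥ (A *ᵥ w)) - (2 * (b ⬝ᵥ x) - x ⬝ᵥ (A *ᵥ x)) := by
  have hswap : x ⬝ᵥ (A *ᵥ w) = w ⬝ᵥ (A *ᵥ x) := by
    rw [dotProduct_mulVec, ← mulVec_transpose, hA.eq, dotProduct_comm]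
  rw [← hw, mulVec_sub, dotProduct_sub, sub_dotProduct, sub_dotProduct, hswap,
    dotProduct_comm (A *ᵥ w) w, dotProduct_comm (A *ᵥ w) x, hswap]
  ring

variable [DecidableEq ι]

theorem Matrix.IsSymm.posSemidef_smul_one_sub {A : Matrix ι ι ℝ} (hA : A.IsSymm) {t : ℝ}
    (ht : ∀ μ ∈ spectrum ℝ A, μ ≤ t) : (t • 1 - A).PosSemidef := by
  refine posSemidef_iff_isHermitian_and_spectrum_nonneg.2 ⟨?_, ?_⟩
  · exact isHermitian_iff_isSymm.2 ((isSymm_one.smul t).sub hA)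
  · rw [← Algebra.algebraMap_eq_smul_one, ← spectrum.singleton_sub_eq]
    rintro _ ⟨_, rfl, μ, hμ, rfl⟩
    exact sub_nonneg.2 (ht μ hμ)

theorem Matrix.IsSymm.nonneg_of_spectrum_le [Nonempty ι] {A : Matrix ι ι ℝ} (hA : A.IsSymm)
    (hdiag : ∀ i, A i i = 0) {t : ℝ} (ht : ∀ μ ∈ spectrum ℝ A, μ ≤ t) : 0 ≤ t := by
  obtain ⟨i⟩ := ‹Nonempty ι›
  simpa [hdiag] using (hA.posSemidef_smul_one_sub ht).diag_nonneg (i := i)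

theorem Matrix.IsSymm.posDef_smul_one_sub_smul {A : Matrix ι ι ℝ} (hA : A.IsSymm) {t r δ : ℝ}
    (ht : ∀ μ ∈ spectrum ℝ A, μ ≤ t) (hδ : 0 ≤ δ) (hr : δ * t < r) :
    (r • 1 - δ • A).PosDef := by
  have h : r • (1 : Matrix ι ι ℝ) - δ • A = (r - δ * t) • 1 + δ • (t • 1 - A) := by module
  rw [h]
  exact (PosDef.one.smul (sub_pos.2 hr)).add_posSemidef ((hA.posSemidef_smul_one_sub ht).smul hδ)

end QuadraticForm

section ParetoPrices

variable {n : ℕ} (G : Matrix (Fin n) (Fin n) ℝ) (δ : ℝ)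

noncomputable def lagrangeMatrix (η : ℝ) : Matrix (Fin n) (Fin n) ℝ :=
  Hmat G δ - (η / 2) • (Hmat G δ * Hmat G δ)

theorem profit_add_mul_surplus (hH : (Hmat G δ).IsSymm) (a c p : Fin n → ℝ) (η : ℝ) :
    profit G δ a c p + η * surplus G δ a p =
      2 * ((Hmat G δ *ᵥ ((1 / 2 : ℝ) • (a - c))) ⬝ᵥ (a - p)) -
        (a - p) ⬝ᵥ (lagrangeMatrix G δ η *ᵥ (a - p)) := by
  have hpc : p - c = (2 : ℝ) • ((1 / 2 : ℝ) • (a - c)) - (a - p) := by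
    rw [smul_smul]; norm_num
  rw [profit, surplus, lagrangeMatrix, hpc, sub_dotProduct, smul_dotProduct, dotProduct_mulVec,
    ← mulVec_transpose, hH.eq, dotProduct_comm, sub_mulVec, dotProduct_sub, smul_mulVec,
    dotProduct_smul, smul_eq_mul, smul_eq_mul]
  ring

variable {G δ}

theorem Hmat_mul_one_sub_smul (hK : IsUnit (1 - δ • G)) : Hmat G δ * (1 - δ • G) = 1 :=
  nonsing_inv_mul _ ((isUnit_iff_isUnit_det _).1 hK)

theorem one_sub_smul_mul_Hmat (hK : IsUnit (1 - δ • G)) : (1 - δ • G) * Hmat G δ = 1 :=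
  mul_nonsing_inv _ ((isUnit_iff_isUnit_det _).1 hK)

theorem Hmat_mul_smul_one_sub_smul (hK : IsUnit (1 - δ • G)) (η : ℝ) :
    Hmat G δ * ((1 - η / 2) • 1 - δ • G) = 1 - (η / 2) • Hmat G δ := by
  have h : (1 - η / 2) • (1 : Matrix (Fin n) (Fin n) ℝ) - δ • G = (1 - δ • G) - (η / 2) • 1 := by
    module
  rw [h, mul_sub, Hmat_mul_one_sub_smul hK, mul_smul_comm, mul_one]

theorem smul_one_sub_smul_mul_Hmat (hK : IsUnit (1 - δ • G)) (η : ℝ) :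
    ((1 - η / 2) • 1 - δ • G) * Hmat G δ = 1 - (η / 2) • Hmat G δ := by
  have h : (1 - η / 2) • (1 : Matrix (Fin n) (Fin n) ℝ) - δ • G = (1 - δ • G) - (η / 2) • 1 := by
    module
  rw [h, sub_mul, one_sub_smul_mul_Hmat hK, smul_mul_assoc, one_mul]

theorem lagrangeMatrix_eq_mul_mul (hK : IsUnit (1 - δ • G)) (η : ℝ) :
    lagrangeMatrix G δ η = Hmat G δ * ((1 - η / 2) • 1 - δ • G) * Hmat G δ := by
  rw [mul_assoc, smul_one_sub_smul_mul_Hmat hK, lagrangeMatrix, mul_sub, mul_one, mul_smul_comm]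

theorem lagrangeMatrix_posDef (hpd : (Hmat G δ).PosDef) {η : ℝ}
    (hB : ((1 - η / 2) • 1 - δ • G).PosDef) : (lagrangeMatrix G δ η).PosDef := by
  have hK : IsUnit (1 - δ • G) := isUnit_nonsing_inv_iff.1 hpd.isUnit
  rw [lagrangeMatrix_eq_mul_mul hK]
  nth_rw 1 [← hpd.isHermitian.eq]
  exact hB.conjTranspose_mul_mul_same (mulVec_injective_iff_isUnit.2 hpd.isUnit)

theorem a_sub_pFam (a c : Fin n → ℝ) (η : ℝ) :
    a - pFam G δ a c η = (1 / 2 : ℝ) • (a - c) +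
      (η / (2 - η)) • ((1 - (2 * δ / (2 - η)) • G)⁻¹ *ᵥ ((1 / 2 : ℝ) • (a - c))) := by
  rw [pFam, pUR]
  module

theorem smul_one_sub_smul_mulVec_a_sub_pFam {η : ℝ} (hη : η < 2)
    (hB : ((1 - η / 2) • 1 - δ • G).PosDef) (a c : Fin n → ℝ) :
    ((1 - η / 2) • 1 - δ • G) *ᵥ (a - pFam G δ a c η) = (1 - δ • G) *ᵥ ((1 / 2 : ℝ) • (a - c)) := by
  set B : Matrix (Fin n) (Fin n) ℝ := (1 - η / 2) • 1 - δ • G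
  set M : Matrix (Fin n) (Fin n) ℝ := 1 - (2 * δ / (2 - η)) • G
  have hη' : 2 - η ≠ 0 := by linarith
  have hMB : M = (2 / (2 - η)) • B := by
    rw [smul_sub, smul_smul, smul_smul, show 2 / (2 - η) * (1 - η / 2) = 1 by field_simp,
      one_smul, div_mul_eq_mul_div]
  have hM : IsUnit M := by
    rw [hMB]
    exact (hB.smul (by positivity : (0 : ℝ) < 2 / (2 - η))).isUnit
  have hBM : B * M⁻¹ = ((2 - η) / 2) • 1 := by
    rw [← mul_nonsing_inv M ((isUnit_iff_isUnit_det M).1 hM), ← smul_mul_assoc, hMB, smul_smul,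
      show (2 - η) / 2 * (2 / (2 - η)) = 1 by field_simp, one_smul]
  have hK : 1 - δ • G = B + (η / 2) • 1 := by module
  have hc : η / (2 - η) * ((2 - η) / 2) = η / 2 := by field_simp
  rw [a_sub_pFam, mulVec_add, mulVec_smul B (η / (2 - η)), mulVec_mulVec, hBM, smul_mulVec,
    one_mulVec, smul_smul, hc, hK, add_mulVec, smul_mulVec, one_mulVec]

theorem lagrangeMatrix_mulVec_a_sub_pFam (hK : IsUnit (1 - δ • G)) {η : ℝ} (hη : η < 2)
    (hB : ((1 - η / 2) • 1 - δ • G).PosDef) (a c : Fin n → ℝ) :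
    lagrangeMatrix G δ η *ᵥ (a - pFam G δ a c η) = Hmat G δ *ᵥ ((1 / 2 : ℝ) • (a - c)) := by
  have hA : lagrangeMatrix G δ η = Hmat G δ * Hmat G δ * ((1 - η / 2) • 1 - δ • G) := by
    rw [mul_assoc, Hmat_mul_smul_one_sub_smul hK, lagrangeMatrix, mul_sub, mul_one, mul_smul_comm]
  rw [hA, ← mulVec_mulVec, smul_one_sub_smul_mulVec_a_sub_pFam hη hB, mulVec_mulVec, mul_assoc,
    Hmat_mul_one_sub_smul hK, mul_one]

theorem profit_add_mul_surplus_add_quad (hpd : (Hmat G δ).PosDef) {η : ℝ} (hη : η < 2)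
    (hB : ((1 - η / 2) • 1 - δ • G).PosDef) (a c p : Fin n → ℝ) :
    profit G δ a c p + η * surplus G δ a p +
        (pFam G δ a c η - p) ⬝ᵥ (lagrangeMatrix G δ η *ᵥ (pFam G δ a c η - p)) =
      profit G δ a c (pFam G δ a c η) + η * surplus G δ a (pFam G δ a c η) := by
  have hK : IsUnit (1 - δ • G) := isUnit_nonsing_inv_iff.1 hpd.isUnit
  have hH : (Hmat G δ).IsSymm := isHermitian_iff_isSymm.1 hpd.isHermitian
  have hA : (lagrangeMatrix G δ η).IsSymm :=
    isHermitian_iff_isSymm.1 (lagrangeMatrix_posDef hpd hB).isHermitian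
  have hsq := hA.sub_dotProduct_mulVec_sub (lagrangeMatrix_mulVec_a_sub_pFam hK hη hB a c) (a - p)
  rw [sub_sub_sub_cancel_left] at hsq
  rw [profit_add_mul_surplus G δ hH, profit_add_mul_surplus G δ hH, hsq]
  ring

end ParetoPrices

theorem stmt2_general {n : ℕ} (hn : 1 ≤ n)
    (G : Matrix (Fin n) (Fin n) ℝ) (hGsym : G.IsSymm)
    (hGdiag : ∀ i, G i i = 0)
    (δ : ℝ) (hδ : 0 ≤ δ)
    (lam1 : ℝ)
    (hlam1max : ∀ μ ∈ spectrum ℝ G, μ ≤ lam1)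
    (hpd : (Hmat G δ).PosDef)
    (a c : Fin n → ℝ) :
    ∀ η ∈ Set.Ico (0 : ℝ) (2 - 2 * δ * lam1),
      ∀ p : Fin n → ℝ, surplus G δ a (pFam G δ a c η) ≤ surplus G δ a p →
        profit G δ a c p ≤ profit G δ a c (pFam G δ a c η) ∧
        (profit G δ a c p = profit G δ a c (pFam G δ a c η) → p = pFam G δ a c η) := by
  rintro η ⟨hη0, hηlt⟩ p hV
  have : Nonempty (Fin n) := ⟨⟨0, hn⟩⟩
  have hlam1 : 0 ≤ lam1 := hGsym.nonneg_of_spectrum_le hGdiag hlam1max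
  have hη2 : η < 2 := by linarith [mul_nonneg hδ hlam1]
  have hB : ((1 - η / 2) • 1 - δ • G).PosDef :=
    hGsym.posDef_smul_one_sub_smul hlam1max hδ (by linarith)
  have hA := lagrangeMatrix_posDef hpd hB
  have hΦ := profit_add_mul_surplus_add_quad hpd hη2 hB a c p
  have hηV := mul_le_mul_of_nonneg_left hV hη0
  refine ⟨?_, fun heq => ?_⟩
  · have := hA.posSemidef.dotProduct_mulVec_nonneg (pFam G δ a c η - p)
    rw [star_trivial] at this
    linarith
  · by_contra hne
    have := hA.dotProduct_mulVec_pos (sub_ne_zero.2 (Ne.symm hne))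
    rw [star_trivial] at this
    linarith

theorem stmt2 {n : ℕ} (hn : 1 ≤ n)
    (G : Matrix (Fin n) (Fin n) ℝ) (hGsym : G.IsSymm)
    (hGnn : ∀ i j, 0 ≤ G i j) (hGdiag : ∀ i, G i i = 0)
    (δ : ℝ) (hδ : 0 ≤ δ)
    (lam1 : ℝ) (hlam1 : lam1 ∈ spectrum ℝ G)
    (hlam1max : ∀ μ ∈ spectrum ℝ G, μ ≤ lam1)
    (hA1 : 0 < 1 - δ * lam1)
    (hpd : (Hmat G δ).PosDef)
    (a c : Fin n → ℝ) (hac : ∀ i, c i < a i) :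
    ∀ η ∈ Set.Ico (0 : ℝ) (2 - 2 * δ * lam1),
      ∀ p : Fin n → ℝ, surplus G δ a (pFam G δ a c η) ≤ surplus G δ a p →
        profit G δ a c p ≤ profit G δ a c (pFam G δ a c η) ∧
        (profit G δ a c p = profit G δ a c (pFam G δ a c η) → p = pFam G δ a c η) :=
  stmt2_general hn G hGsym hGdiag δ hδ lam1 hlam1max hpd a c
end

section
/- Let η ∈ (0, 2 − 2δλ₁) and define ι(η) := (I − δG)⁻¹ (I − (2δ/(2−η))·G)⁻¹ (a − c). Then ι(η) has strictly positive entries, and the regulated equilibrium price p* equals 𝕡(η) if and only if 𝕡(η) ∈ K and ⟨ι(η), p⟩ ≤ ⟨ι(η), 𝕡(η)⟩ for every p ∈ K (i.e., K is contained in the half-space below the supporting hyperplane with normal ι(η) through 𝕡(η)). -/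
/-!
Π is a concave quadratic with gradient `H (a + c - 2p)`, strictly concave since `H` is positive
definite, so its maximiser over a convex set is unique and is characterised by the variational
inequality `⟨∇Π(p), q - p⟩ ≤ 0` for `q ∈ K`. At `p = 𝕡(η)` the gradient equals `η / (2 - η) • ι(η)`,
a positive multiple of `ι(η)`, so this inequality is exactly the half-space condition.

For the positivity of `ι(η)`: since `G ≥ 0` and `s λ₁ < 1`, each factor `I - sG` is positive definite
with nonpositive off-diagonal entries, and such a matrix sends positive vectors to positive vectors
under its inverse.
-/

open Matrix

/-- The weight vector ι(η) = (I − δG)⁻¹ (I − (2δ/(2−η))G)⁻¹ (a − c). -/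
noncomputable def iotaVec {n : ℕ} (G : Matrix (Fin n) (Fin n) ℝ) (δ : ℝ)
    (a c : Fin n → ℝ) (η : ℝ) : Fin n → ℝ :=
  Hmat G δ *ᵥ ((1 - (2 * δ / (2 - η)) • G)⁻¹ *ᵥ (a - c))

section QuadraticForms

variable {m : Type*} [Fintype m]

lemma Matrix.IsSymm.dotProduct_mulVec_comm {R : Type*} [CommSemiring R] {A : Matrix m m R}
    (hA : A.IsSymm) (u v : m → R) : u ⬝ᵥ (A *ᵥ v) = v ⬝ᵥ (A *ᵥ u) := by
  rw [dotProduct_mulVec, ← mulVec_transpose, hA.eq, dotProduct_comm]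

lemma dotProduct_mulVec_le_abs {G : Matrix m m ℝ} (hG : ∀ i j, 0 ≤ G i j) (y : m → ℝ) :
    y ⬝ᵥ (G *ᵥ y) ≤ |y| ⬝ᵥ (G *ᵥ |y|) := by
  simp only [dot_mulVec_eq_sum_sum, Pi.abs_apply]
  refine Finset.sum_le_sum fun j _ => Finset.sum_le_sum fun i _ => ?_
  calc y i * G i j * y j ≤ |y i * G i j * y j| := le_abs_self _
    _ = |y i| * G i j * |y j| := by rw [abs_mul, abs_mul, abs_of_nonneg (hG i j)]

variable [DecidableEq m] {G : Matrix m m ℝ}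

lemma Matrix.IsSymm.dotProduct_mulVec_le (hG : G.IsSymm) {lam : ℝ}
    (hlam : ∀ μ ∈ spectrum ℝ G, μ ≤ lam) (x : m → ℝ) :
    x ⬝ᵥ (G *ᵥ x) ≤ lam * (x ⬝ᵥ x) := by
  have hpsd : (lam • 1 - G).PosSemidef := by
    refine posSemidef_iff_isHermitian_and_spectrum_nonneg.2 ⟨by simpa using (isSymm_one.smul lam).sub hG, ?_⟩
    rw [← Algebra.algebraMap_eq_smul_one, ← spectrum.singleton_sub_eq]
    rintro _ ⟨_, rfl, μ, hμ, rfl⟩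
    simpa using hlam μ hμ
  have := hpsd.dotProduct_mulVec_nonneg x
  simp only [star_trivial, sub_mulVec, smul_mulVec, one_mulVec, dotProduct_sub,
    dotProduct_smul, smul_eq_mul] at this
  linarith

lemma Matrix.IsSymm.diag_le (hG : G.IsSymm) {lam : ℝ}
    (hlam : ∀ μ ∈ spectrum ℝ G, μ ≤ lam) (i : m) : G i i ≤ lam := by
  simpa using hG.dotProduct_mulVec_le hlam (Pi.single i 1)

lemma Matrix.IsSymm.posDef_one_sub_smul (hG : G.IsSymm) {lam s : ℝ}
    (hlam : ∀ μ ∈ spectrum ℝ G, μ ≤ lam) (hs : 0 ≤ s) (hslam : s * lam < 1) :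
    (1 - s • G).PosDef := by
  refine PosDef.of_dotProduct_mulVec_pos (by simpa using isSymm_one.sub (hG.smul s)) fun x hx => ?_
  have hxx : 0 < x ⬝ᵥ x := by simpa using dotProduct_star_self_pos_iff.2 hx
  have hGx := mul_le_mul_of_nonneg_left (hG.dotProduct_mulVec_le hlam x) hs
  simp only [star_trivial, sub_mulVec, smul_mulVec, one_mulVec, dotProduct_sub,
    dotProduct_smul, smul_eq_mul]
  nlinarith

lemma inv_one_sub_smul_mulVec_pos (hG : ∀ i j, 0 ≤ G i j) {s : ℝ} (hs : 0 ≤ s)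
    (hA : (1 - s • G).PosDef) {x : m → ℝ} (hx : ∀ i, 0 < x i) (i : m) :
    0 < ((1 - s • G)⁻¹ *ᵥ x) i := by
  set A := 1 - s • G
  set y := A⁻¹ *ᵥ x
  have hAy : A *ᵥ y = x := by
    rw [mulVec_mulVec, mul_nonsing_inv _ ((isUnit_iff_isUnit_det _).1 hA.isUnit), one_mulVec]
  have hA_abs : |y| ⬝ᵥ (A *ᵥ |y|) ≤ y ⬝ᵥ (A *ᵥ y) := by
    have hyy : |y| ⬝ᵥ |y| = y ⬝ᵥ y := by simp [dotProduct, Pi.abs_apply, abs_mul_abs_self]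
    have := mul_le_mul_of_nonneg_left (dotProduct_mulVec_le_abs hG y) hs
    simp only [A, sub_mulVec, smul_mulVec, one_mulVec, dotProduct_sub, dotProduct_smul,
      smul_eq_mul, hyy]
    linarith
  have hxy : x ⬝ᵥ y ≤ x ⬝ᵥ |y| :=
    dotProduct_le_dotProduct_of_nonneg_left (le_abs_self y) fun i => (hx i).le
  -- `y` minimises `z ↦ z ⬝ᵥ A z - 2 x ⬝ᵥ z`, and `|y|` does at least as well, so `|y| = y`.
  have hquad : (|y| - y) ⬝ᵥ (A *ᵥ (|y| - y)) ≤ 0 := by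
    have hyAy : y ⬝ᵥ (A *ᵥ y) = x ⬝ᵥ y := by rw [hAy, dotProduct_comm]
    have hyAw : y ⬝ᵥ (A *ᵥ |y|) = x ⬝ᵥ |y| := by
      rw [(isHermitian_iff_isSymm.1 hA.isHermitian).dotProduct_mulVec_comm, hAy, dotProduct_comm]
    have hwAy : |y| ⬝ᵥ (A *ᵥ y) = x ⬝ᵥ |y| := by rw [hAy, dotProduct_comm]
    simp only [mulVec_sub, dotProduct_sub, sub_dotProduct, hyAy, hyAw, hwAy]
    linarith
  have hy : |y| = y := by
    by_contra hne
    have := hA.dotProduct_mulVec_pos (sub_ne_zero.2 hne)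
    rw [star_trivial] at this
    linarith
  have hGy : 0 ≤ (G *ᵥ y) i :=
    Finset.sum_nonneg fun j _ => mul_nonneg (hG i j) (hy ▸ abs_nonneg (y j))
  have hyi : y i - s * (G *ᵥ y) i = x i := by
    simpa [A, sub_mulVec, smul_mulVec] using congrFun hAy i
  nlinarith [hx i, mul_nonneg hs hGy]

end QuadraticForms

lemma nonpos_of_forall_le_mul {g Q : ℝ} (h : ∀ t ∈ Set.Ioc (0 : ℝ) 1, g ≤ t * Q) : g ≤ 0 := by
  by_contra! hg
  have hgQ : g ≤ Q := by simpa using h 1 ⟨one_pos, le_rfl⟩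
  have hQ : 0 < Q := hg.trans_le hgQ
  have ht : g / (2 * Q) ≤ 1 := by
    rw [div_le_one (by positivity)]
    linarith
  have := h (g / (2 * Q)) ⟨by positivity, ht⟩
  rw [div_mul_eq_mul_div, mul_div_mul_right _ _ hQ.ne'] at this
  linarith

noncomputable def profitGrad {n : ℕ} (G : Matrix (Fin n) (Fin n) ℝ) (δ : ℝ)
    (a c p : Fin n → ℝ) : Fin n → ℝ :=
  Hmat G δ *ᵥ (a + c - (2 : ℝ) • p)

section Profit

variable {n : ℕ} {G : Matrix (Fin n) (Fin n) ℝ} {δ : ℝ} {a c : Fin n → ℝ}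

lemma profit_eq_add_profitGrad_sub (hH : (Hmat G δ).IsSymm) (p q : Fin n → ℝ) :
    profit G δ a c q = profit G δ a c p + (q - p) ⬝ᵥ profitGrad G δ a c p
      - (q - p) ⬝ᵥ (Hmat G δ *ᵥ (q - p)) := by
  have hqc : q - c = (p - c) + (q - p) := by abel
  have haq : a - q = (a - p) - (q - p) := by abel
  have hgrad : a + c - (2 : ℝ) • p = (a - p) - (p - c) := by module
  rw [profit, profit, profitGrad, hqc, haq, hgrad]
  generalize p - c = u, q - p = v, a - p = w
  simp only [mulVec_sub, add_dotProduct, dotProduct_sub]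
  rw [hH.dotProduct_mulVec_comm u v]
  ring

lemma profitGrad_nonpos_of_isMaxOn (hH : (Hmat G δ).IsSymm) {K : Set (Fin n → ℝ)}
    (hK : Convex ℝ K) {p q : Fin n → ℝ} (hp : p ∈ K) (hq : q ∈ K)
    (hmax : IsMaxOn (profit G δ a c) K p) :
    (q - p) ⬝ᵥ profitGrad G δ a c p ≤ 0 := by
  refine nonpos_of_forall_le_mul (Q := (q - p) ⬝ᵥ (Hmat G δ *ᵥ (q - p))) fun t ht => ?_
  have := isMaxOn_iff.1 hmax _ (hK.add_smul_sub_mem hp hq ⟨ht.1.le, ht.2⟩)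
  rw [profit_eq_add_profitGrad_sub hH p, add_sub_cancel_left, mulVec_smul, smul_dotProduct,
    smul_dotProduct, dotProduct_smul, smul_eq_mul, smul_eq_mul, smul_eq_mul] at this
  nlinarith [ht.1]

lemma isMaxOn_profit_iff (hH : (Hmat G δ).PosSemidef) {K : Set (Fin n → ℝ)} (hK : Convex ℝ K)
    {p : Fin n → ℝ} (hp : p ∈ K) :
    IsMaxOn (profit G δ a c) K p ↔ ∀ q ∈ K, (q - p) ⬝ᵥ profitGrad G δ a c p ≤ 0 := by
  have hsymm : (Hmat G δ).IsSymm := isHermitian_iff_isSymm.1 hH.isHermitian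
  refine ⟨fun hmax q hq => profitGrad_nonpos_of_isMaxOn hsymm hK hp hq hmax,
    fun hgrad => isMaxOn_iff.2 fun q hq => ?_⟩
  have hquad := hH.dotProduct_mulVec_nonneg (q - p)
  rw [star_trivial] at hquad
  linarith [profit_eq_add_profitGrad_sub (a := a) (c := c) hsymm p q, hgrad q hq]

lemma eq_of_isMaxOn_profit (hH : (Hmat G δ).PosDef) {K : Set (Fin n → ℝ)} (hK : Convex ℝ K)
    {p p' : Fin n → ℝ} (hp : p ∈ K) (hp' : p' ∈ K) (hmax : IsMaxOn (profit G δ a c) K p)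
    (hmax' : IsMaxOn (profit G δ a c) K p') : p = p' := by
  have hsymm : (Hmat G δ).IsSymm := isHermitian_iff_isSymm.1 hH.isHermitian
  by_contra hne
  have hquad := hH.dotProduct_mulVec_pos (sub_ne_zero.2 (Ne.symm hne))
  rw [star_trivial] at hquad
  linarith [profit_eq_add_profitGrad_sub (a := a) (c := c) hsymm p p',
    profitGrad_nonpos_of_isMaxOn hsymm hK hp hp' hmax, isMaxOn_iff.1 hmax' p hp]

lemma eq_iff_of_isMaxOn_profit (hH : (Hmat G δ).PosDef) {K : Set (Fin n → ℝ)}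
    (hK : Convex ℝ K) {p : Fin n → ℝ} (hp : p ∈ K) (hmax : IsMaxOn (profit G δ a c) K p)
    (q : Fin n → ℝ) :
    p = q ↔ q ∈ K ∧ ∀ r ∈ K, (r - q) ⬝ᵥ profitGrad G δ a c q ≤ 0 := by
  refine ⟨?_, fun ⟨hq, hgrad⟩ => ?_⟩
  · rintro rfl
    exact ⟨hp, (isMaxOn_profit_iff hH.posSemidef hK hp).1 hmax⟩
  · exact eq_of_isMaxOn_profit hH hK hp hq hmax ((isMaxOn_profit_iff hH.posSemidef hK hq).2 hgrad)

lemma profitGrad_pFam (η : ℝ) :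
    profitGrad G δ a c (pFam G δ a c η) = (η / (2 - η)) • iotaVec G δ a c η := by
  simp only [profitGrad, iotaVec, pFam, pUR, mulVec_smul]
  rw [← mulVec_smul (Hmat G δ)]
  congr 1
  module

end Profit

theorem stmt5_general {n : ℕ} (hn : 1 ≤ n)
    (G : Matrix (Fin n) (Fin n) ℝ) (hGsym : G.IsSymm)
    (hGnn : ∀ i j, 0 ≤ G i j)
    (δ : ℝ) (hδ : 0 ≤ δ)
    (lam1 : ℝ)
    (hlam1max : ∀ μ ∈ spectrum ℝ G, μ ≤ lam1)
    (hA1 : 0 < 1 - δ * lam1)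
    (a c : Fin n → ℝ) (hac : ∀ i, c i < a i)
    (K : Set (Fin n → ℝ)) (hKconv : Convex ℝ K)
    (pstar : Fin n → ℝ) (hps : pstar ∈ K ∧ ∀ q ∈ K, profit G δ a c q ≤ profit G δ a c pstar)
    (η : ℝ) (hη : η ∈ Set.Ioo (0 : ℝ) (2 - 2 * δ * lam1)) :
    (∀ k, 0 < iotaVec G δ a c η k) ∧
    (pstar = pFam G δ a c η ↔
      (pFam G δ a c η ∈ K ∧
        ∀ p ∈ K, iotaVec G δ a c η ⬝ᵥ p ≤ iotaVec G δ a c η ⬝ᵥ pFam G δ a c η)) := by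
  obtain ⟨hη0, hη2⟩ := hη
  have hlam1 : 0 ≤ lam1 := (hGnn ⟨0, hn⟩ ⟨0, hn⟩).trans (hGsym.diag_le hlam1max _)
  have h2η : 0 < 2 - η := by nlinarith [mul_nonneg hδ hlam1]
  have hs : 0 ≤ 2 * δ / (2 - η) := by positivity
  have hslam : 2 * δ / (2 - η) * lam1 < 1 := by
    rw [div_mul_eq_mul_div, div_lt_one h2η]
    linarith
  have hA : (1 - δ • G).PosDef := hGsym.posDef_one_sub_smul hlam1max hδ (by linarith)
  have hM : (1 - (2 * δ / (2 - η)) • G).PosDef := hGsym.posDef_one_sub_smul hlam1max hs hslam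
  refine ⟨inv_one_sub_smul_mulVec_pos hGnn hδ hA
    (inv_one_sub_smul_mulVec_pos hGnn hs hM fun i => sub_pos.2 (hac i)), ?_⟩
  rw [eq_iff_of_isMaxOn_profit hA.inv hKconv hps.1 (isMaxOn_iff.2 hps.2), profitGrad_pFam]
  refine and_congr_right fun _ => forall₂_congr fun p _ => ?_
  rw [dotProduct_smul, smul_nonpos_iff_nonpos_of_pos_left (div_pos hη0 h2η),
    sub_dotProduct, sub_nonpos, dotProduct_comm p, dotProduct_comm (pFam G δ a c η)]

theorem stmt5 {n : ℕ} (hn : 1 ≤ n)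
    (G : Matrix (Fin n) (Fin n) ℝ) (hGsym : G.IsSymm)
    (hGnn : ∀ i j, 0 ≤ G i j) (hGdiag : ∀ i, G i i = 0)
    (δ : ℝ) (hδ : 0 ≤ δ)
    (lam1 : ℝ) (hlam1 : lam1 ∈ spectrum ℝ G)
    (hlam1max : ∀ μ ∈ spectrum ℝ G, μ ≤ lam1)
    (hA1 : 0 < 1 - δ * lam1)
    (hpd : (Hmat G δ).PosDef)
    (a c : Fin n → ℝ) (hac : ∀ i, c i < a i)
    (K : Set (Fin n → ℝ)) (hKne : K.Nonempty) (hKcl : IsClosed K) (hKconv : Convex ℝ K)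
    (pstar : Fin n → ℝ) (hps : pstar ∈ K ∧ ∀ q ∈ K, profit G δ a c q ≤ profit G δ a c pstar)
    (η : ℝ) (hη : η ∈ Set.Ioo (0 : ℝ) (2 - 2 * δ * lam1)) :
    (∀ k, 0 < iotaVec G δ a c η k) ∧
    (pstar = pFam G δ a c η ↔
      (pFam G δ a c η ∈ K ∧
        ∀ p ∈ K, iotaVec G δ a c η ⬝ᵥ p ≤ iotaVec G δ a c η ⬝ᵥ pFam G δ a c η)) :=
  stmt5_general hn G hGsym hGnn δ hδ lam1 hlam1max hA1 a c hac K hKconv pstar hps η hη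
end

section
/- Suppose K is invariant under uniform translations, i.e. p + t·𝟙 ∈ K for every p ∈ K and every t ∈ ℝ (as for regulations that only restrict price differences across markets), and suppose p^ur ∉ K. Then the regulated equilibrium price does not belong to the Pareto-optimal price family: p* ≠ 𝕡(η) for every η ∈ [0, 2 − 2δλ₁). Hence the regulated outcome is Pareto inefficient. -/
/-!
Uniform translations keep prices in `K`, so the first-order condition for maximizing profit along
the all-ones direction reads `𝟙ᵀ H (p^ur - p*) = 0`. Since `𝕡(0) = p^ur ∉ K`, only `η > 0` is left,
and then `p^ur - 𝕡(η)` is a positive multiple of `(I - εG)⁻¹ (a - c)/2` with `ε = 2δ/(2 - η)`,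
`ελ₁ < 1`. Both `I - δG` and `I - εG` are positive definite with nonpositive off-diagonal entries,
and the inverse of such a matrix `I - B` satisfies `(I - B)⁻¹ d ≥ d` for `d ≥ 0`. Hence `H𝟙 ≥ 𝟙`
and `(I - εG)⁻¹ (a - c)/2 ≥ (a - c)/2 > 0`, which makes `𝟙ᵀ H (p^ur - 𝕡(η))` strictly positive.
-/

open Matrix

namespace Matrix

variable {ι : Type*} [Fintype ι]

lemma dotProduct_mulVec_nonpos_of_offDiag_nonpos {M : Matrix ι ι ℝ}
    (hM : ∀ i j, i ≠ j → M i j ≤ 0) {u w : ι → ℝ} (hu : 0 ≤ u) (hw : 0 ≤ w)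
    (huw : ∀ i, u i * w i = 0) : u ⬝ᵥ (M *ᵥ w) ≤ 0 := by
  simp only [dotProduct, mulVec, Finset.mul_sum]
  refine Finset.sum_nonpos fun i _ => Finset.sum_nonpos fun j _ => ?_
  rcases eq_or_ne i j with rfl | hij
  · linear_combination M i i * huw i
  · nlinarith [hM i j hij, mul_nonneg (hu i) (hw j)]

lemma nonneg_of_posDef_of_mulVec_nonneg {M : Matrix ι ι ℝ} (hM : M.PosDef)
    (hoff : ∀ i j, i ≠ j → M i j ≤ 0) {x : ι → ℝ} (hx : 0 ≤ M *ᵥ x) : 0 ≤ x := by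
  have hcross : x⁻ ⬝ᵥ (M *ᵥ x⁺) ≤ 0 :=
    dotProduct_mulVec_nonpos_of_offDiag_nonpos hoff (negPart_nonneg x) (posPart_nonneg x)
      fun i => by
        rcases le_total 0 (x i) with h | h
        · simp [negPart_eq_zero.mpr h]
        · simp [posPart_eq_zero.mpr h]
  have hneg : x⁻ ⬝ᵥ (M *ᵥ x⁻) ≤ 0 := by
    have hsplit : x⁻ ⬝ᵥ (M *ᵥ x⁻) = x⁻ ⬝ᵥ (M *ᵥ x⁺) - x⁻ ⬝ᵥ (M *ᵥ x) := by
      rw [← dotProduct_sub, ← mulVec_sub,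
        sub_eq_iff_eq_add'.mpr (sub_eq_iff_eq_add.mp (posPart_sub_negPart x))]
    rw [hsplit]
    linarith [dotProduct_nonneg_of_nonneg (negPart_nonneg x) hx]
  by_contra hx
  have := hM.dotProduct_mulVec_pos (x := x⁻) (negPart_eq_zero.not.mpr hx)
  rw [star_trivial] at this
  linarith

variable [DecidableEq ι]

lemma IsHermitian.posSemidef_smul_one_sub {A : Matrix ι ι ℝ} (hA : A.IsHermitian) {lam : ℝ}
    (hmax : ∀ μ ∈ spectrum ℝ A, μ ≤ lam) : (lam • 1 - A).PosSemidef := by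
  rw [posSemidef_iff_isHermitian_and_spectrum_nonneg]
  refine ⟨(isHermitian_one.smul (.all lam)).sub hA, ?_⟩
  rw [← Algebra.algebraMap_eq_smul_one, ← spectrum.singleton_sub_eq]
  rintro _ ⟨_, rfl, μ, hμ, rfl⟩
  exact sub_nonneg.mpr (hmax μ hμ)

lemma IsHermitian.posDef_one_sub_smul {A : Matrix ι ι ℝ} (hA : A.IsHermitian) {lam : ℝ}
    (hmax : ∀ μ ∈ spectrum ℝ A, μ ≤ lam) {ε : ℝ} (hε : 0 ≤ ε) (hεlam : ε * lam < 1) :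
    (1 - ε • A).PosDef := by
  have hsplit : 1 - ε • A = (1 - ε * lam) • (1 : Matrix ι ι ℝ) + ε • (lam • 1 - A) := by
    module
  rw [hsplit]
  exact (PosDef.one.smul (sub_pos.mpr hεlam)).add_posSemidef
    ((hA.posSemidef_smul_one_sub hmax).smul hε)

lemma IsHermitian.nonneg_of_spectrum_le_of_diag_eq_zero [Nonempty ι] {A : Matrix ι ι ℝ}
    (hA : A.IsHermitian) {lam : ℝ} (hmax : ∀ μ ∈ spectrum ℝ A, μ ≤ lam)
    (hdiag : ∀ i, A i i = 0) : 0 ≤ lam := by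
  obtain ⟨i⟩ := ‹Nonempty ι›
  simpa [hdiag] using (hA.posSemidef_smul_one_sub hmax).diag_nonneg (i := i)

lemma le_inv_one_sub_mulVec {B : Matrix ι ι ℝ} (hB : ∀ i j, 0 ≤ B i j) (hpd : (1 - B).PosDef)
    {d : ι → ℝ} (hd : 0 ≤ d) : d ≤ (1 - B)⁻¹ *ᵥ d := by
  set x := (1 - B)⁻¹ *ᵥ d
  have hx : (1 - B) *ᵥ x = d := by
    rw [mulVec_mulVec, mul_nonsing_inv _ (isUnit_iff_ne_zero.mpr hpd.det_pos.ne'), one_mulVec]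
  have hx0 : 0 ≤ x := nonneg_of_posDef_of_mulVec_nonneg hpd
    (fun i j hij => by simp [one_apply_ne hij, hB i j]) (hx ▸ hd)
  calc d = x - B *ᵥ x := by rw [← hx, sub_mulVec, one_mulVec]
    _ ≤ x := sub_le_self _ fun i => Finset.sum_nonneg fun j _ => mul_nonneg (hB i j) (hx0 j)

end Matrix

lemma eq_zero_of_forall_mul_sub_sq_mul_nonpos {b q : ℝ} (h : ∀ t : ℝ, t * b - t ^ 2 * q ≤ 0) :
    b = 0 := by
  have hmax : IsLocalMax (fun t : ℝ => t * b - t ^ 2 * q) 0 :=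
    Filter.Eventually.of_forall fun t => by simpa using h t
  refine hmax.hasDerivAt_eq_zero ?_
  simpa using (hasDerivAt_mul_const b).fun_sub ((hasDerivAt_pow 2 (0 : ℝ)).mul_const q)

section Monopoly

variable {n : ℕ} {G : Matrix (Fin n) (Fin n) ℝ} {δ : ℝ}

lemma Hmat_transpose (hG : G.IsSymm) : (Hmat G δ)ᵀ = Hmat G δ := by
  rw [Hmat, transpose_nonsing_inv, transpose_sub, transpose_one, transpose_smul, hG.eq]

lemma profit_add_smul (hG : G.IsSymm) (a c p v : Fin n → ℝ) (t : ℝ) :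
    profit G δ a c (p + t • v) = profit G δ a c p
      + t * (2 * (v ⬝ᵥ Hmat G δ *ᵥ (pUR a c - p))) - t ^ 2 * (v ⬝ᵥ Hmat G δ *ᵥ v) := by
  have hsymm : (p - c) ⬝ᵥ Hmat G δ *ᵥ v = v ⬝ᵥ Hmat G δ *ᵥ (p - c) := by
    rw [dotProduct_mulVec, ← mulVec_transpose, Hmat_transpose hG, dotProduct_comm]
  have hUR : (a - p) - (p - c) = (2 : ℝ) • (pUR a c - p) := by
    simp only [pUR]; module
  have hlin : v ⬝ᵥ Hmat G δ *ᵥ (a - p) - v ⬝ᵥ Hmat G δ *ᵥ (p - c)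
      = 2 * (v ⬝ᵥ Hmat G δ *ᵥ (pUR a c - p)) := by
    rw [← dotProduct_sub, ← mulVec_sub, hUR, mulVec_smul, dotProduct_smul, smul_eq_mul]
  have hp : p + t • v - c = (p - c) + t • v := by abel
  have ha : a - (p + t • v) = (a - p) - t • v := by abel
  rw [← hlin, profit, profit, hp, ha]
  simp only [mulVec_sub, mulVec_smul, dotProduct_sub, add_dotProduct, dotProduct_smul,
    smul_dotProduct, smul_eq_mul, hsymm]
  ring

lemma dotProduct_Hmat_mulVec_pUR_sub_eq_zero (hG : G.IsSymm) {a c p v : Fin n → ℝ}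
    (hmax : ∀ t : ℝ, profit G δ a c (p + t • v) ≤ profit G δ a c p) :
    v ⬝ᵥ Hmat G δ *ᵥ (pUR a c - p) = 0 := by
  have h := eq_zero_of_forall_mul_sub_sq_mul_nonpos (b := 2 * (v ⬝ᵥ Hmat G δ *ᵥ (pUR a c - p)))
    (q := v ⬝ᵥ Hmat G δ *ᵥ v) fun t => by linarith [hmax t, profit_add_smul (δ := δ) hG a c p v t]
  linarith

lemma pFam_zero (a c : Fin n → ℝ) : pFam G δ a c 0 = pUR a c := by
  simp [pFam]

end Monopoly

theorem stmt6_general {n : ℕ} (hn : 1 ≤ n)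
    (G : Matrix (Fin n) (Fin n) ℝ) (hGsym : G.IsSymm)
    (hGnn : ∀ i j, 0 ≤ G i j) (hGdiag : ∀ i, G i i = 0)
    (δ : ℝ) (hδ : 0 ≤ δ)
    (lam1 : ℝ)
    (hlam1max : ∀ μ ∈ spectrum ℝ G, μ ≤ lam1)
    (hA1 : 0 < 1 - δ * lam1)
    (a c : Fin n → ℝ) (hac : ∀ i, c i < a i)
    (K : Set (Fin n → ℝ))
    (pstar : Fin n → ℝ) (hps : pstar ∈ K ∧ ∀ q ∈ K, profit G δ a c q ≤ profit G δ a c pstar)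
    (hKtrans : ∀ p ∈ K, ∀ t : ℝ, (p + t • (fun _ => (1 : ℝ))) ∈ K)
    (hpur : pUR a c ∉ K) :
    ∀ η ∈ Set.Ico (0 : ℝ) (2 - 2 * δ * lam1), pstar ≠ pFam G δ a c η := by
  rintro η ⟨hη0, hηlt⟩ rfl
  have : Nonempty (Fin n) := ⟨⟨0, hn⟩⟩
  have hGherm : G.IsHermitian := isHermitian_iff_isSymm.mpr hGsym
  have hlam1 : 0 ≤ lam1 := hGherm.nonneg_of_spectrum_le_of_diag_eq_zero hlam1max hGdiag
  have hfoc := dotProduct_Hmat_mulVec_pUR_sub_eq_zero hGsym (v := 1)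
    fun t => hps.2 _ (hKtrans _ hps.1 t)
  rcases hη0.eq_or_lt with rfl | hηpos
  · exact hpur (pFam_zero (G := G) (δ := δ) a c ▸ hps.1)
  have h2η : 0 < 2 - η := by nlinarith [mul_nonneg hδ hlam1]
  set ε := 2 * δ / (2 - η)
  have hεlam : ε * lam1 < 1 := by
    rw [div_mul_eq_mul_div, div_lt_one h2η]; linarith
  have hH : 1 ≤ Hmat G δ *ᵥ 1 :=
    le_inv_one_sub_mulVec (fun i j => mul_nonneg hδ (hGnn i j))
      (hGherm.posDef_one_sub_smul hlam1max hδ (by linarith)) zero_le_one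
  set u := (1 - ε • G)⁻¹ *ᵥ ((1 / 2 : ℝ) • (a - c))
  have hu : (1 / 2 : ℝ) • (a - c) ≤ u :=
    le_inv_one_sub_mulVec (fun i j => mul_nonneg (by positivity) (hGnn i j))
      (hGherm.posDef_one_sub_smul hlam1max (by positivity) hεlam)
      fun i => by simpa using (hac i).le
  have hpos : 0 < 1 ⬝ᵥ Hmat G δ *ᵥ u := by
    rw [dotProduct_mulVec, ← mulVec_transpose, Hmat_transpose hGsym]
    exact Finset.sum_pos (fun i _ => mul_pos (one_pos.trans_le (hH i))
      ((by simpa using hac i : 0 < ((1 / 2 : ℝ) • (a - c)) i).trans_le (hu i)))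
      Finset.univ_nonempty
  have hfam : pUR a c - pFam G δ a c η = (η / (2 - η)) • u := sub_sub_cancel _ _
  rw [hfam, mulVec_smul, dotProduct_smul, smul_eq_mul] at hfoc
  exact (mul_pos (div_pos hηpos h2η) hpos).ne' hfoc

theorem stmt6 {n : ℕ} (hn : 1 ≤ n)
    (G : Matrix (Fin n) (Fin n) ℝ) (hGsym : G.IsSymm)
    (hGnn : ∀ i j, 0 ≤ G i j) (hGdiag : ∀ i, G i i = 0)
    (δ : ℝ) (hδ : 0 ≤ δ)
    (lam1 : ℝ) (hlam1 : lam1 ∈ spectrum ℝ G)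
    (hlam1max : ∀ μ ∈ spectrum ℝ G, μ ≤ lam1)
    (hA1 : 0 < 1 - δ * lam1)
    (hpd : (Hmat G δ).PosDef)
    (a c : Fin n → ℝ) (hac : ∀ i, c i < a i)
    (K : Set (Fin n → ℝ)) (hKne : K.Nonempty) (hKcl : IsClosed K) (hKconv : Convex ℝ K)
    (pstar : Fin n → ℝ) (hps : pstar ∈ K ∧ ∀ q ∈ K, profit G δ a c q ≤ profit G δ a c pstar)
    (hKtrans : ∀ p ∈ K, ∀ t : ℝ, (p + t • (fun _ => (1 : ℝ))) ∈ K)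
    (hpur : pUR a c ∉ K) :
    ∀ η ∈ Set.Ico (0 : ℝ) (2 - 2 * δ * lam1), pstar ≠ pFam G δ a c η :=
  stmt6_general hn G hGsym hGnn hGdiag δ hδ lam1 hlam1max hA1 a c hac K pstar hps hKtrans hpur
end

section
/- Let A denote the closure in ℝ of the set {𝒜(p) : p ∈ K}. Then A is a nonempty closed interval and contains a unique element 𝒜* of minimal absolute value. As δ tends to 1/λ₁ from the left: 𝒜(p*(δ)) → 𝒜*, R_Π(p*(δ), δ) → 1 − (𝒜*)², and R_V(p*(δ), δ) → (1 − 𝒜*)². In particular, in the limit the equilibrium behaves as if the firm minimized the absolute average price deviation |𝒜(p)| over K. -/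
open Matrix

/-- The all-ones vector 𝟙. -/
def onesVec (n : ℕ) : Fin n → ℝ := fun _ => 1

/-- The sufficient statistic 𝒜(p) = ⟨w₁, p − p^ur⟩ / ⟨w₁, (a−c)/2⟩. -/
noncomputable def AAstat {n : ℕ} (w1 a c p : Fin n → ℝ) : ℝ :=
  (w1 ⬝ᵥ (p - pUR a c)) / (w1 ⬝ᵥ ((1 / 2 : ℝ) • (a - c)))

/-- Profit ratio R_Π(p, δ). -/
noncomputable def Rpi {n : ℕ} (G : Matrix (Fin n) (Fin n) ℝ) (δ : ℝ)
    (a c p : Fin n → ℝ) : ℝ :=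
  profit G δ a c p / profit G δ a c (pUR a c)

/-- Consumer-surplus ratio R_V(p, δ). -/
noncomputable def Rv {n : ℕ} (G : Matrix (Fin n) (Fin n) ℝ) (δ : ℝ)
    (a c p : Fin n → ℝ) : ℝ :=
  surplus G δ a p / surplus G δ a (pUR a c)

/-!
In the orthonormal eigenbasis `w` of `G` (the paper's `w₁` is `w 0`), put `t = 1 - δ λ₁`,
`κᵢ = t / (1 - δ λᵢ)`, `βᵢ = ⟨wᵢ, (a - c)/2⟩` and `ξᵢ(p) = ⟨wᵢ, p - p^ur⟩`. Then
`t Π(p) = Σ κᵢ (βᵢ² - ξᵢ(p)²)` and `t² V(p) = ½ Σ κᵢ² (βᵢ - ξᵢ(p))²`, so `p*(δ)` minimises the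
weighted deviation `Σ κᵢ ξᵢ²` over `K`. As `δ → 1/λ₁` we have `κ₁ = 1` and `κᵢ → 0` for `i ≠ 1`.
The weighted deviation always dominates `ξ₁² = β₁² 𝒜²` and tends to it at every fixed price, so its
minimum tends to `β₁² (𝒜*)²` and `𝒜(p*(δ))² → (𝒜*)²`. Because the closure of `𝒜(K)` is an interval,
its points lie on the same side of `0` as `𝒜*`, which upgrades this to `𝒜(p*(δ)) → 𝒜*`.
The bounded weighted deviation also controls the coordinates `i ≠ 1` of `p*(δ)`, which gives the
limit of `R_V`.
-/

open Filter Topology Set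

section OrthonormalEigenbasis

variable {R ι : Type*} [CommRing R] [Fintype ι] [DecidableEq ι] {w : ι → ι → R}

theorem sum_dotProduct_smul_eq_self (horth : ∀ i j, w i ⬝ᵥ w j = if i = j then 1 else 0)
    (v : ι → R) : ∑ i, (w i ⬝ᵥ v) • w i = v := by
  have hWWt : Matrix.of w * (Matrix.of w)ᵀ = 1 := by
    ext i j
    simpa [Matrix.mul_apply, Matrix.one_apply, dotProduct] using horth i j
  calc ∑ i, (w i ⬝ᵥ v) • w i = (Matrix.of w)ᵀ *ᵥ (Matrix.of w *ᵥ v) := by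
        ext k
        simp [Matrix.mulVec, dotProduct, Finset.sum_apply, mul_comm]
    _ = v := by rw [Matrix.mulVec_mulVec, mul_eq_one_comm.mp hWWt, Matrix.one_mulVec]

theorem dotProduct_mulVec_eq_sum_of_eigen (horth : ∀ i j, w i ⬝ᵥ w j = if i = j then 1 else 0)
    {S : Matrix ι ι R} {μ : ι → R} (hS : ∀ i, S *ᵥ w i = μ i • w i) (u v : ι → R) :
    u ⬝ᵥ (S *ᵥ v) = ∑ i, μ i * ((w i ⬝ᵥ u) * (w i ⬝ᵥ v)) := by
  conv_lhs => rw [← sum_dotProduct_smul_eq_self horth v]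
  rw [Matrix.mulVec_sum, dotProduct_sum]
  refine Finset.sum_congr rfl fun i _ => ?_
  rw [Matrix.mulVec_smul, hS, dotProduct_smul, dotProduct_smul, dotProduct_comm u, smul_eq_mul,
    smul_eq_mul]
  ring

end OrthonormalEigenbasis

theorem Matrix.inv_mulVec_eq_inv_smul {K ι : Type*} [Field K] [Fintype ι] [DecidableEq ι]
    {A : Matrix ι ι K} (hA : IsUnit A) {v : ι → K} {c : K} (hv : A *ᵥ v = c • v) (hc : c ≠ 0) :
    A⁻¹ *ᵥ v = c⁻¹ • v := by
  have := hA.invertible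
  exact Matrix.inv_mulVec_eq_vec <| by
    rw [Matrix.mulVec_smul, hv, smul_smul, inv_mul_cancel₀ hc, one_smul]

theorem Hmat_mulVec_of_mulVec_eq {n : ℕ} {G : Matrix (Fin n) (Fin n) ℝ} {δ l : ℝ}
    (hH : IsUnit (Hmat G δ)) (hl : 1 - δ * l ≠ 0) {v : Fin n → ℝ} (hv : G *ᵥ v = l • v) :
    Hmat G δ *ᵥ v = (1 - δ * l)⁻¹ • v := by
  refine Matrix.inv_mulVec_eq_inv_smul (Matrix.isUnit_nonsing_inv_iff.mp hH) ?_ hl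
  rw [Matrix.sub_mulVec, Matrix.one_mulVec, Matrix.smul_mulVec, hv, smul_smul, sub_smul, one_smul]

theorem exists_abs_le_of_isClosed {T : Set ℝ} (hT : IsClosed T) (hne : T.Nonempty) :
    ∃ a ∈ T, ∀ z ∈ T, |a| ≤ |z| := by
  obtain ⟨a, ha, hdist⟩ := hT.exists_infDist_eq_dist hne 0
  refine ⟨a, ha, fun z hz => ?_⟩
  have := Metric.infDist_le_dist_of_mem (x := 0) hz
  rwa [hdist, dist_zero_left, dist_zero_left, Real.norm_eq_abs, Real.norm_eq_abs] at this

theorem Set.OrdConnected.abs_sub_eq_of_forall_abs_le {T : Set ℝ} (hT : T.OrdConnected) {a z : ℝ}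
    (ha : a ∈ T) (hmin : ∀ y ∈ T, |a| ≤ |y|) (hz : z ∈ T) : |z - a| = |z| - |a| := by
  have hsign : 0 ≤ a * z := by
    by_contra! h
    have h0 : (0 : ℝ) ∈ T := by
      refine hT.uIcc_subset ha hz (mem_uIcc.2 ?_)
      rcases mul_neg_iff.1 h with ⟨ha0, hz0⟩ | ⟨ha0, hz0⟩
      · exact .inr ⟨hz0.le, ha0.le⟩
      · exact .inl ⟨ha0.le, hz0.le⟩
    have := hmin 0 h0
    rw [abs_zero, abs_nonpos_iff] at this
    simp [this] at h
  have hprod : |a| * |z| = a * z := by rw [← abs_mul, abs_of_nonneg hsign]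
  rw [← sq_eq_sq₀ (abs_nonneg _) (sub_nonneg.2 (hmin z hz)), sq_abs]
  linear_combination (sq_abs z).symm + (sq_abs a).symm + 2 * hprod

theorem Set.OrdConnected.eq_of_forall_abs_le {T : Set ℝ} (hT : T.OrdConnected) {a z : ℝ}
    (hz : z ∈ T) (hzmin : ∀ y ∈ T, |z| ≤ |y|) (ha : a ∈ T) (hmin : ∀ y ∈ T, |a| ≤ |y|) :
    z = a := by
  have := hT.abs_sub_eq_of_forall_abs_le ha hmin hz
  rw [le_antisymm (hzmin a ha) (hmin z hz), sub_self, abs_eq_zero] at this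
  exact sub_eq_zero.1 this

section ClosestToZero

variable {α : Type*} {l : Filter α} {S : Set ℝ} {a : ℝ} {s F : α → ℝ}

theorem tendsto_sq_of_sq_le_of_forall_lt (ha : a ∈ closure S)
    (hmin : ∀ z ∈ closure S, |a| ≤ |z|) (hs : ∀ᶠ x in l, s x ∈ S)
    (hsF : ∀ᶠ x in l, s x ^ 2 ≤ F x) (hF : ∀ y ∈ S, ∀ c, y ^ 2 < c → ∀ᶠ x in l, F x < c) :
    Tendsto F l (𝓝 (a ^ 2)) := by
  refine tendsto_order.2 ⟨fun c hc => ?_, fun c hc => ?_⟩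
  · filter_upwards [hs, hsF] with x hsx hsFx
    exact hc.trans_le ((sq_le_sq.2 (hmin _ (subset_closure hsx))).trans hsFx)
  · obtain ⟨y, hyc, hyS⟩ := mem_closure_iff.1 ha {y | y ^ 2 < c}
      (isOpen_lt (continuous_pow 2) continuous_const) hc
    exact hF y hyS c hyc

theorem tendsto_of_sq_le_of_forall_lt (hT : (closure S).OrdConnected) (ha : a ∈ closure S)
    (hmin : ∀ z ∈ closure S, |a| ≤ |z|) (hs : ∀ᶠ x in l, s x ∈ S)
    (hsF : ∀ᶠ x in l, s x ^ 2 ≤ F x) (hF : ∀ y ∈ S, ∀ c, y ^ 2 < c → ∀ᶠ x in l, F x < c) :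
    Tendsto s l (𝓝 a) := by
  have hsq : Tendsto (fun x => s x ^ 2) l (𝓝 (a ^ 2)) :=
    tendsto_of_tendsto_of_tendsto_of_le_of_le' tendsto_const_nhds
      (tendsto_sq_of_sq_le_of_forall_lt ha hmin hs hsF hF)
      (hs.mono fun x hx => sq_le_sq.2 (hmin _ (subset_closure hx))) hsF
  have habs : Tendsto (fun x => |s x| - |a|) l (𝓝 0) := by
    have := (hsq.sqrt).sub_const |a|
    simpa only [Real.sqrt_sq_eq_abs, sub_self] using this
  refine tendsto_iff_dist_tendsto_zero.2 (habs.congr' ?_)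
  filter_upwards [hs] with x hx
  rw [Real.dist_eq, hT.abs_sub_eq_of_forall_abs_le ha hmin (subset_closure hx)]

end ClosestToZero

section SpectralWeight

variable {n : ℕ} [NeZero n]

/-- The eigenvalue of `(1 - δ * lam 0) • Hmat G δ` on `w i`: it stays bounded as
`δ → 1 / lam 0`, where `Hmat G δ` itself blows up. -/
noncomputable def spectralWeight (lam : Fin n → ℝ) (δ : ℝ) (i : Fin n) : ℝ :=
  (1 - δ * lam 0) / (1 - δ * lam i)

theorem one_sub_mul_pos_of_mem_Ico {lam : Fin n → ℝ} (hgap : ∀ i, i ≠ 0 → lam i < lam 0)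
    (hlam0 : 0 < lam 0) {δ : ℝ} (hδ : δ ∈ Ico 0 (1 / lam 0)) (i : Fin n) :
    0 < 1 - δ * lam i := by
  have hδ0 : δ * lam 0 < 1 := (lt_div_iff₀ hlam0).1 (by simpa using hδ.2)
  have hle : lam i ≤ lam 0 := by
    rcases eq_or_ne i 0 with rfl | hi
    exacts [le_rfl, (hgap i hi).le]
  nlinarith [mul_le_mul_of_nonneg_left hle hδ.1]

theorem spectralWeight_zero {lam : Fin n → ℝ} {δ : ℝ} (h : 1 - δ * lam 0 ≠ 0) :
    spectralWeight lam δ 0 = 1 :=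
  div_self h

theorem spectralWeight_nonneg {lam : Fin n → ℝ} {δ : ℝ} (hpos : ∀ i, 0 < 1 - δ * lam i)
    (i : Fin n) : 0 ≤ spectralWeight lam δ i :=
  div_nonneg (hpos 0).le (hpos i).le

theorem tendsto_spectralWeight {lam : Fin n → ℝ} (hgap : ∀ i, i ≠ 0 → lam i < lam 0)
    (hlam0 : 0 < lam 0) (i : Fin n) :
    Tendsto (fun δ => spectralWeight lam δ i) (𝓝[Ico 0 (1 / lam 0)] (1 / lam 0))
      (𝓝 (if i = 0 then 1 else 0)) := by
  split_ifs with hi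
  · subst hi
    refine tendsto_const_nhds.congr' ?_
    filter_upwards [self_mem_nhdsWithin] with δ hδ
    exact (spectralWeight_zero (one_sub_mul_pos_of_mem_Ico hgap hlam0 hδ 0).ne').symm
  · have hden : 1 - 1 / lam 0 * lam i ≠ 0 := by
      rw [sub_ne_zero, ne_comm, one_div_mul_eq_div]
      exact ((div_lt_one hlam0).2 (hgap i hi)).ne
    have hcont : ContinuousAt (fun δ => spectralWeight lam δ i) (1 / lam 0) :=
      ContinuousAt.div (by fun_prop) (by fun_prop) hden
    have hval : spectralWeight lam (1 / lam 0) i = 0 := by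
      rw [spectralWeight, one_div_mul_cancel hlam0.ne', sub_self, zero_div]
    exact hval ▸ hcont.tendsto.mono_left nhdsWithin_le_nhds

end SpectralWeight

def weightedSqNorm {ι : Type*} [Fintype ι] (w : ι → ι → ℝ) (ν x : ι → ℝ) : ℝ :=
  ∑ i, ν i * (w i ⬝ᵥ x) ^ 2

section WeightedSqNorm

variable {ι : Type*} [Fintype ι] {w : ι → ι → ℝ} {α : Type*} {l : Filter α} {i₀ : ι}

@[simp]
theorem weightedSqNorm_zero (ν : ι → ℝ) : weightedSqNorm w ν 0 = 0 := by
  simp [weightedSqNorm]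

theorem sq_le_weightedSqNorm {ν : ι → ℝ} (hν : ∀ i, 0 ≤ ν i) (hν₀ : ν i₀ = 1)
    (x : ι → ℝ) : (w i₀ ⬝ᵥ x) ^ 2 ≤ weightedSqNorm w ν x := by
  simpa [weightedSqNorm, hν₀] using
    Finset.single_le_sum (fun i _ => mul_nonneg (hν i) (sq_nonneg (w i ⬝ᵥ x))) (Finset.mem_univ i₀)

theorem tendsto_weightedSqNorm [DecidableEq ι] {ν : α → ι → ℝ}
    (hν : ∀ i, Tendsto (fun d => ν d i) l (𝓝 (if i = i₀ then 1 else 0))) (x : ι → ℝ) :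
    Tendsto (fun d => weightedSqNorm w (ν d) x) l (𝓝 ((w i₀ ⬝ᵥ x) ^ 2)) := by
  have := tendsto_finsetSum Finset.univ fun i _ => (hν i).mul_const ((w i ⬝ᵥ x) ^ 2)
  simpa [weightedSqNorm, ite_mul, Finset.sum_ite_eq'] using this

theorem tendsto_weightedSqNorm_sq_sub [DecidableEq ι] {ν : α → ι → ℝ}
    (hν : ∀ i, Tendsto (fun d => ν d i) l (𝓝 (if i = i₀ then 1 else 0)))
    (hνnn : ∀ᶠ d in l, ∀ i, 0 ≤ ν d i) {x : α → ι → ℝ} {L C : ℝ}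
    (hx : Tendsto (fun d => w i₀ ⬝ᵥ x d) l (𝓝 L))
    (hC : ∀ᶠ d in l, weightedSqNorm w (ν d) (x d) ≤ C) (y : ι → ℝ) :
    Tendsto (fun d => weightedSqNorm w (ν d ^ 2) (y - x d)) l (𝓝 ((w i₀ ⬝ᵥ y - L) ^ 2)) := by
  have hterm : ∀ i, Tendsto (fun d => ν d i ^ 2 * (w i ⬝ᵥ (y - x d)) ^ 2) l
      (𝓝 (if i = i₀ then (w i₀ ⬝ᵥ y - L) ^ 2 else 0)) := by
    intro i
    split_ifs with hi
    · subst hi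
      have := ((hν i).pow 2).mul ((tendsto_const_nhds (x := w i ⬝ᵥ y)).sub hx |>.pow 2)
      simpa [dotProduct_sub] using this
    · -- `ν² (u - v)² ≤ 2 ν² u² + 2 ν (ν v²) ≤ 2 ν² u² + 2 ν C`, and `ν → 0`.
      have hν0 : Tendsto (fun d => ν d i) l (𝓝 0) := by simpa [hi] using hν i
      have hbound : Tendsto (fun d => 2 * ν d i ^ 2 * (w i ⬝ᵥ y) ^ 2 + 2 * ν d i * C) l (𝓝 0) := by
        simpa using ((hν0.pow 2).const_mul 2 |>.mul_const ((w i ⬝ᵥ y) ^ 2)).add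
          ((hν0.const_mul 2).mul_const C)
      refine tendsto_of_tendsto_of_tendsto_of_le_of_le' tendsto_const_nhds hbound
        (Eventually.of_forall fun d => by positivity) ?_
      filter_upwards [hνnn, hC] with d hnn hCd
      have hi_le : ν d i * (w i ⬝ᵥ x d) ^ 2 ≤ C :=
        (Finset.single_le_sum (fun j _ => mul_nonneg (hnn j) (sq_nonneg (w j ⬝ᵥ x d)))
          (Finset.mem_univ i)).trans hCd
      rw [dotProduct_sub]
      nlinarith [hnn i, sq_nonneg (w i ⬝ᵥ y + w i ⬝ᵥ x d), mul_le_mul_of_nonneg_left hi_le (hnn i)]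
  have := tendsto_finsetSum Finset.univ fun i _ => hterm i
  simpa [weightedSqNorm, Finset.sum_ite_eq'] using this

end WeightedSqNorm

theorem continuous_AAstat {n : ℕ} (w1 a c : Fin n → ℝ) :
    Continuous (fun p => AAstat w1 a c p) := by
  unfold AAstat; fun_prop

theorem tendsto_AAstat_of_forall_weightedSqNorm_le {n : ℕ} [NeZero n] {α : Type*} {l : Filter α}
    {w : Fin n → Fin n → ℝ} {ν : α → Fin n → ℝ}
    (hν : ∀ i, Tendsto (fun d => ν d i) l (𝓝 (if i = 0 then 1 else 0)))
    (hνnn : ∀ᶠ d in l, ∀ i, 0 ≤ ν d i) (hν₀ : ∀ᶠ d in l, ν d 0 = 1) {a c : Fin n → ℝ}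
    (hβ : w 0 ⬝ᵥ ((1 / 2 : ℝ) • (a - c)) ≠ 0) {K : Set (Fin n → ℝ)} {astar : ℝ}
    (hT : (closure ((fun p => AAstat (w 0) a c p) '' K)).OrdConnected)
    (ha : astar ∈ closure ((fun p => AAstat (w 0) a c p) '' K))
    (hmin : ∀ z ∈ closure ((fun p => AAstat (w 0) a c p) '' K), |astar| ≤ |z|)
    {x : α → Fin n → ℝ} (hxK : ∀ᶠ d in l, x d ∈ K)
    (hxmin : ∀ᶠ d in l, ∀ q ∈ K,
      weightedSqNorm w (ν d) (x d - pUR a c) ≤ weightedSqNorm w (ν d) (q - pUR a c)) :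
    Tendsto (fun d => AAstat (w 0) a c (x d)) l (𝓝 astar) ∧
      Tendsto (fun d => weightedSqNorm w (ν d) (x d - pUR a c)) l
        (𝓝 ((w 0 ⬝ᵥ ((1 / 2 : ℝ) • (a - c))) ^ 2 * astar ^ 2)) := by
  set β := w 0 ⬝ᵥ ((1 / 2 : ℝ) • (a - c))
  have hAA : ∀ p, AAstat (w 0) a c p ^ 2 = (w 0 ⬝ᵥ (p - pUR a c)) ^ 2 / β ^ 2 := fun p => by
    rw [AAstat, div_pow]
  set F := fun d => weightedSqNorm w (ν d) (x d - pUR a c) / β ^ 2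
  have hs : ∀ᶠ d in l, AAstat (w 0) a c (x d) ∈ (fun p => AAstat (w 0) a c p) '' K :=
    hxK.mono fun d hd => ⟨x d, hd, rfl⟩
  have hsF : ∀ᶠ d in l, AAstat (w 0) a c (x d) ^ 2 ≤ F d := by
    filter_upwards [hνnn, hν₀] with d hnn h0
    rw [hAA]
    exact div_le_div_of_nonneg_right (sq_le_weightedSqNorm hnn h0 _) (sq_nonneg β)
  have hF : ∀ y ∈ (fun p => AAstat (w 0) a c p) '' K, ∀ r, y ^ 2 < r → ∀ᶠ d in l, F d < r := by
    rintro _ ⟨q, hq, rfl⟩ r hr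
    have hlim := (tendsto_weightedSqNorm (w := w) hν (q - pUR a c)).div_const (β ^ 2)
    rw [← hAA] at hlim
    filter_upwards [hxmin, hlim.eventually (gt_mem_nhds hr)] with d hd hdr
    exact (div_le_div_of_nonneg_right (hd q hq) (sq_nonneg β)).trans_lt hdr
  refine ⟨tendsto_of_sq_le_of_forall_lt hT ha hmin hs hsF hF, ?_⟩
  have := (tendsto_sq_of_sq_le_of_forall_lt ha hmin hs hsF hF).const_mul (β ^ 2)
  refine this.congr fun d => ?_
  simp only [F]
  field_simp

theorem sub_pUR {n : ℕ} (a c : Fin n → ℝ) : a - pUR a c = (1 / 2 : ℝ) • (a - c) := by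
  ext k; simp [pUR]; ring

section Monopoly

variable {n : ℕ} [NeZero n] {G : Matrix (Fin n) (Fin n) ℝ} {w : Fin n → Fin n → ℝ}
  {lam : Fin n → ℝ} {δ : ℝ} {a c : Fin n → ℝ}

theorem mul_profit_eq (horth : ∀ i j, w i ⬝ᵥ w j = if i = j then 1 else 0)
    (heig : ∀ i, G *ᵥ w i = lam i • w i) (hH : IsUnit (Hmat G δ))
    (hd : ∀ i, 1 - δ * lam i ≠ 0) (p : Fin n → ℝ) :
    (1 - δ * lam 0) * profit G δ a c p =
      weightedSqNorm w (spectralWeight lam δ) ((1 / 2 : ℝ) • (a - c))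
        - weightedSqNorm w (spectralWeight lam δ) (p - pUR a c) := by
  have hpc : p - c = (1 / 2 : ℝ) • (a - c) + (p - pUR a c) := by ext k; simp [pUR]; ring
  have hap : a - p = (1 / 2 : ℝ) • (a - c) - (p - pUR a c) := by ext k; simp [pUR]; ring
  generalize (1 / 2 : ℝ) • (a - c) = b at hpc hap ⊢
  generalize p - pUR a c = x at hpc hap ⊢
  rw [profit, hpc, hap, dotProduct_mulVec_eq_sum_of_eigen horth
    (fun i => Hmat_mulVec_of_mulVec_eq hH (hd i) (heig i)), weightedSqNorm, weightedSqNorm,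
    ← Finset.sum_sub_distrib, Finset.mul_sum]
  refine Finset.sum_congr rfl fun i _ => ?_
  rw [dotProduct_add, dotProduct_sub, spectralWeight]
  ring

theorem mul_surplus_eq (horth : ∀ i j, w i ⬝ᵥ w j = if i = j then 1 else 0)
    (heig : ∀ i, G *ᵥ w i = lam i • w i) (hH : IsUnit (Hmat G δ))
    (hd : ∀ i, 1 - δ * lam i ≠ 0) (p : Fin n → ℝ) :
    (1 - δ * lam 0) ^ 2 * surplus G δ a p
      = (1 / 2 : ℝ) * weightedSqNorm w (spectralWeight lam δ ^ 2) (a - p) := by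
  have hHw := fun i => Hmat_mulVec_of_mulVec_eq hH (hd i) (heig i)
  have hH2w : ∀ i, (Hmat G δ * Hmat G δ) *ᵥ w i = (1 - δ * lam i)⁻¹ ^ 2 • w i := fun i => by
    rw [← Matrix.mulVec_mulVec, hHw, Matrix.mulVec_smul, hHw, smul_smul, sq]
  rw [surplus, dotProduct_mulVec_eq_sum_of_eigen horth hH2w, weightedSqNorm, Finset.mul_sum,
    Finset.mul_sum, Finset.mul_sum]
  refine Finset.sum_congr rfl fun i _ => ?_
  rw [Pi.pow_apply, spectralWeight]
  ring

theorem Rpi_eq_one_sub (horth : ∀ i j, w i ⬝ᵥ w j = if i = j then 1 else 0)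
    (heig : ∀ i, G *ᵥ w i = lam i • w i) (hH : IsUnit (Hmat G δ))
    (hd : ∀ i, 1 - δ * lam i ≠ 0)
    (hb : weightedSqNorm w (spectralWeight lam δ) ((1 / 2 : ℝ) • (a - c)) ≠ 0) (p : Fin n → ℝ) :
    Rpi G δ a c p = 1 - weightedSqNorm w (spectralWeight lam δ) (p - pUR a c)
      / weightedSqNorm w (spectralWeight lam δ) ((1 / 2 : ℝ) • (a - c)) := by
  rw [Rpi, ← mul_div_mul_left _ _ (hd 0), mul_profit_eq horth heig hH hd,
    mul_profit_eq horth heig hH hd, sub_self, weightedSqNorm_zero, sub_zero, sub_div, div_self hb]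

theorem Rv_eq_div (horth : ∀ i j, w i ⬝ᵥ w j = if i = j then 1 else 0)
    (heig : ∀ i, G *ᵥ w i = lam i • w i) (hH : IsUnit (Hmat G δ))
    (hd : ∀ i, 1 - δ * lam i ≠ 0) (p : Fin n → ℝ) :
    Rv G δ a c p = weightedSqNorm w (spectralWeight lam δ ^ 2) (a - p)
      / weightedSqNorm w (spectralWeight lam δ ^ 2) ((1 / 2 : ℝ) • (a - c)) := by
  rw [Rv, ← mul_div_mul_left _ _ (pow_ne_zero 2 (hd 0)), mul_surplus_eq horth heig hH hd,
    mul_surplus_eq horth heig hH hd, sub_pUR, mul_div_mul_left _ _ one_half_pos.ne']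

theorem weightedSqNorm_le_of_profit_le (horth : ∀ i j, w i ⬝ᵥ w j = if i = j then 1 else 0)
    (heig : ∀ i, G *ᵥ w i = lam i • w i) (hH : IsUnit (Hmat G δ))
    (hpos : ∀ i, 0 < 1 - δ * lam i) {p q : Fin n → ℝ}
    (hpq : profit G δ a c q ≤ profit G δ a c p) :
    weightedSqNorm w (spectralWeight lam δ) (p - pUR a c)
      ≤ weightedSqNorm w (spectralWeight lam δ) (q - pUR a c) := by
  have hd := fun i => (hpos i).ne'
  have := mul_le_mul_of_nonneg_left hpq (hpos 0).le
  rw [mul_profit_eq horth heig hH hd, mul_profit_eq horth heig hH hd] at this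
  linarith

theorem tendsto_Rpi_of_tendsto_weightedSqNorm
    (horth : ∀ i j, w i ⬝ᵥ w j = if i = j then 1 else 0) (heig : ∀ i, G *ᵥ w i = lam i • w i)
    {l : Filter ℝ} (hreg : ∀ᶠ δ in l, IsUnit (Hmat G δ) ∧ ∀ i, 0 < 1 - δ * lam i)
    (hκ : ∀ i, Tendsto (fun δ => spectralWeight lam δ i) l (𝓝 (if i = 0 then 1 else 0)))
    (hβ : w 0 ⬝ᵥ ((1 / 2 : ℝ) • (a - c)) ≠ 0) {x : ℝ → Fin n → ℝ} {A : ℝ}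
    (hW : Tendsto (fun δ => weightedSqNorm w (spectralWeight lam δ) (x δ - pUR a c)) l
      (𝓝 ((w 0 ⬝ᵥ ((1 / 2 : ℝ) • (a - c))) ^ 2 * A ^ 2))) :
    Tendsto (fun δ => Rpi G δ a c (x δ)) l (𝓝 (1 - A ^ 2)) := by
  have hb := tendsto_weightedSqNorm (w := w) hκ ((1 / 2 : ℝ) • (a - c))
  have hlim := tendsto_const_nhds (x := (1 : ℝ)) |>.sub (hW.div hb (pow_ne_zero 2 hβ))
  rw [mul_div_cancel_left₀ _ (pow_ne_zero 2 hβ)] at hlim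
  refine hlim.congr' ?_
  filter_upwards [hreg, hb.eventually_ne (pow_ne_zero 2 hβ)] with δ ⟨hH, hpos⟩ hbδ
  exact (Rpi_eq_one_sub horth heig hH (fun i => (hpos i).ne') hbδ _).symm

theorem tendsto_Rv_of_tendsto_AAstat
    (horth : ∀ i j, w i ⬝ᵥ w j = if i = j then 1 else 0) (heig : ∀ i, G *ᵥ w i = lam i • w i)
    {l : Filter ℝ} (hreg : ∀ᶠ δ in l, IsUnit (Hmat G δ) ∧ ∀ i, 0 < 1 - δ * lam i)
    (hκ : ∀ i, Tendsto (fun δ => spectralWeight lam δ i) l (𝓝 (if i = 0 then 1 else 0)))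
    (hβ : w 0 ⬝ᵥ ((1 / 2 : ℝ) • (a - c)) ≠ 0) {x : ℝ → Fin n → ℝ} {A W : ℝ}
    (hA : Tendsto (fun δ => AAstat (w 0) a c (x δ)) l (𝓝 A))
    (hW : Tendsto (fun δ => weightedSqNorm w (spectralWeight lam δ) (x δ - pUR a c)) l (𝓝 W)) :
    Tendsto (fun δ => Rv G δ a c (x δ)) l (𝓝 ((1 - A) ^ 2)) := by
  have hκ2 : ∀ i, Tendsto (fun δ => (spectralWeight lam δ ^ 2) i) l
      (𝓝 (if i = 0 then 1 else 0)) := fun i => by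
    convert (hκ i).pow 2 using 2
    · rfl
    · split_ifs <;> norm_num
  have hx : Tendsto (fun δ => w 0 ⬝ᵥ (x δ - pUR a c)) l
      (𝓝 (w 0 ⬝ᵥ ((1 / 2 : ℝ) • (a - c)) * A)) :=
    (hA.const_mul _).congr fun δ => by rw [AAstat, mul_div_cancel₀ _ hβ]
  have hnum := tendsto_weightedSqNorm_sq_sub hκ
    (hreg.mono fun δ hδ => spectralWeight_nonneg hδ.2) hx
    ((hW.eventually (gt_mem_nhds (lt_add_one W))).mono fun _ => le_of_lt) ((1 / 2 : ℝ) • (a - c))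
  have hlim := hnum.div (tendsto_weightedSqNorm (w := w) hκ2 _) (pow_ne_zero 2 hβ)
  rw [← mul_one_sub, mul_pow, mul_div_cancel_left₀ _ (pow_ne_zero 2 hβ)] at hlim
  refine hlim.congr' ?_
  filter_upwards [hreg] with δ ⟨hH, hpos⟩
  rw [Rv_eq_div horth heig hH (fun i => (hpos i).ne'), Pi.div_apply, ← sub_pUR,
    sub_sub_sub_cancel_right]

end Monopoly

theorem stmt9_general {n : ℕ} [NeZero n]
    (G : Matrix (Fin n) (Fin n) ℝ)
    (w : Fin n → Fin n → ℝ) (lam : Fin n → ℝ)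
    (horth : ∀ i j, w i ⬝ᵥ w j = if i = j then (1 : ℝ) else 0)
    (heig : ∀ i, G *ᵥ w i = lam i • w i)
    (hgap : ∀ i, i ≠ 0 → lam i < lam 0)
    (hlam0 : 0 < lam 0)
    (hw0 : ∀ k, 0 < w 0 k)
    (hpd : ∀ δ ∈ Set.Ico (0 : ℝ) (1 / lam 0), (Hmat G δ).PosDef)
    (a c : Fin n → ℝ) (hac : ∀ i, c i < a i)
    (K : Set (Fin n → ℝ)) (hKne : K.Nonempty) (hKconv : Convex ℝ K)
    (pstar : ℝ → Fin n → ℝ)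
    (hps : ∀ δ ∈ Set.Ico (0 : ℝ) (1 / lam 0),
      pstar δ ∈ K ∧ ∀ q ∈ K, profit G δ a c q ≤ profit G δ a c (pstar δ)) :
    (closure ((fun p => AAstat (w 0) a c p) '' K)).Nonempty ∧
    IsClosed (closure ((fun p => AAstat (w 0) a c p) '' K)) ∧
    (closure ((fun p => AAstat (w 0) a c p) '' K)).OrdConnected ∧
    ∃ astar ∈ closure ((fun p => AAstat (w 0) a c p) '' K),
      (∀ z ∈ closure ((fun p => AAstat (w 0) a c p) '' K), |astar| ≤ |z|) ∧
      (∀ z ∈ closure ((fun p => AAstat (w 0) a c p) '' K),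
        (∀ y ∈ closure ((fun p => AAstat (w 0) a c p) '' K), |z| ≤ |y|) → z = astar) ∧
      Filter.Tendsto (fun δ : ℝ => AAstat (w 0) a c (pstar δ))
        (nhdsWithin (1 / lam 0) (Set.Ico 0 (1 / lam 0))) (nhds astar) ∧
      Filter.Tendsto (fun δ : ℝ => Rpi G δ a c (pstar δ))
        (nhdsWithin (1 / lam 0) (Set.Ico 0 (1 / lam 0))) (nhds (1 - astar ^ 2)) ∧
      Filter.Tendsto (fun δ : ℝ => Rv G δ a c (pstar δ))
        (nhdsWithin (1 / lam 0) (Set.Ico 0 (1 / lam 0))) (nhds ((1 - astar) ^ 2)) := by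
  have hT : (closure ((fun p => AAstat (w 0) a c p) '' K)).OrdConnected :=
    isPreconnected_iff_ordConnected.1
      ((hKconv.isPreconnected.image _ (continuous_AAstat _ a c).continuousOn).closure)
  obtain ⟨astar, hastar, hmin⟩ := exists_abs_le_of_isClosed isClosed_closure
    (hKne.image (fun p => AAstat (w 0) a c p)).closure
  have hβ : 0 < w 0 ⬝ᵥ ((1 / 2 : ℝ) • (a - c)) := Finset.sum_pos (fun k _ => mul_pos (hw0 k)
    (by simpa using sub_pos.2 (hac k))) Finset.univ_nonempty
  have hI : ∀ᶠ δ in 𝓝[Set.Ico 0 (1 / lam 0)] (1 / lam 0), δ ∈ Set.Ico 0 (1 / lam 0) :=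
    self_mem_nhdsWithin
  have hreg : ∀ᶠ δ in 𝓝[Set.Ico 0 (1 / lam 0)] (1 / lam 0),
      IsUnit (Hmat G δ) ∧ ∀ i, 0 < 1 - δ * lam i :=
    hI.mono fun δ hδ => ⟨(hpd δ hδ).isUnit, one_sub_mul_pos_of_mem_Ico hgap hlam0 hδ⟩
  have hκ := tendsto_spectralWeight hgap hlam0
  obtain ⟨hA, hW⟩ := tendsto_AAstat_of_forall_weightedSqNorm_le hκ
    (hreg.mono fun δ hδ => spectralWeight_nonneg hδ.2)
    (hreg.mono fun δ hδ => spectralWeight_zero (hδ.2 0).ne') hβ.ne' hT hastar hmin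
    (hI.mono fun δ hδ => (hps δ hδ).1)
    (hI.mono fun δ hδ q hq => weightedSqNorm_le_of_profit_le horth heig (hpd δ hδ).isUnit
      (one_sub_mul_pos_of_mem_Ico hgap hlam0 hδ) ((hps δ hδ).2 q hq))
  exact ⟨(hKne.image (fun p => AAstat (w 0) a c p)).closure, isClosed_closure, hT,
    astar, hastar, hmin, fun z hz hzmin => hT.eq_of_forall_abs_le hz hzmin hastar hmin, hA,
    tendsto_Rpi_of_tendsto_weightedSqNorm horth heig hreg hκ hβ.ne' hW,
    tendsto_Rv_of_tendsto_AAstat horth heig hreg hκ hβ.ne' hA hW⟩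

theorem stmt9 {n : ℕ} [NeZero n]
    (G : Matrix (Fin n) (Fin n) ℝ) (hGsym : G.IsSymm)
    (hGnn : ∀ i j, 0 ≤ G i j) (hGdiag : ∀ i, G i i = 0)
    (w : Fin n → Fin n → ℝ) (lam : Fin n → ℝ)
    (horth : ∀ i j, w i ⬝ᵥ w j = if i = j then (1 : ℝ) else 0)
    (heig : ∀ i, G *ᵥ w i = lam i • w i)
    (hgap : ∀ i, i ≠ 0 → lam i < lam 0)
    (hlam0 : 0 < lam 0)
    (hw0 : ∀ k, 0 < w 0 k)
    (hpd : ∀ δ ∈ Set.Ico (0 : ℝ) (1 / lam 0), (Hmat G δ).PosDef)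
    (a c : Fin n → ℝ) (hac : ∀ i, c i < a i)
    (K : Set (Fin n → ℝ)) (hKne : K.Nonempty) (hKcl : IsClosed K) (hKconv : Convex ℝ K)
    (pstar : ℝ → Fin n → ℝ)
    (hps : ∀ δ ∈ Set.Ico (0 : ℝ) (1 / lam 0),
      pstar δ ∈ K ∧ ∀ q ∈ K, profit G δ a c q ≤ profit G δ a c (pstar δ)) :
    (closure ((fun p => AAstat (w 0) a c p) '' K)).Nonempty ∧
    IsClosed (closure ((fun p => AAstat (w 0) a c p) '' K)) ∧
    (closure ((fun p => AAstat (w 0) a c p) '' K)).OrdConnected ∧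
    ∃ astar ∈ closure ((fun p => AAstat (w 0) a c p) '' K),
      (∀ z ∈ closure ((fun p => AAstat (w 0) a c p) '' K), |astar| ≤ |z|) ∧
      (∀ z ∈ closure ((fun p => AAstat (w 0) a c p) '' K),
        (∀ y ∈ closure ((fun p => AAstat (w 0) a c p) '' K), |z| ≤ |y|) → z = astar) ∧
      Filter.Tendsto (fun δ : ℝ => AAstat (w 0) a c (pstar δ))
        (nhdsWithin (1 / lam 0) (Set.Ico 0 (1 / lam 0))) (nhds astar) ∧
      Filter.Tendsto (fun δ : ℝ => Rpi G δ a c (pstar δ))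
        (nhdsWithin (1 / lam 0) (Set.Ico 0 (1 / lam 0))) (nhds (1 - astar ^ 2)) ∧
      Filter.Tendsto (fun δ : ℝ => Rv G δ a c (pstar δ))
        (nhdsWithin (1 / lam 0) (Set.Ico 0 (1 / lam 0))) (nhds ((1 - astar) ^ 2)) :=
  stmt9_general G w lam horth heig hgap hlam0 hw0 hpd a c hac K hKne hKconv pstar hps
end

section
/- Suppose there exists p̃ ∈ K with ⟨w₁, p̃⟩ = ⟨w₁, p^ur⟩. (This holds, in particular, when K is invariant under translations by multiples of 𝟙, as for regulations bounding price differences; when K = {p : ⟨θ, p⟩ ≤ M} for a weight θ ∈ ℝⁿ not proportional to w₁; and when K = {p : p̲ ≤ p ≤ p̄} with ⟨w₁, p̲⟩ ≤ ⟨w₁, p^ur⟩ ≤ ⟨w₁, p̄⟩.) Then, as δ tends to 1/λ₁ from the left, R_Π(p*(δ), δ) → 1 and R_V(p*(δ), δ) → 1: the price regulation is welfare-neutral in the limit of large spillovers. -/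
/-!
Index `0` is the paper's top eigenvalue `λ₁`. Write `μᵢ = (1 - δ λᵢ)⁻¹`, `mᵢ = ⟨wᵢ, (a - c)/2⟩` and
`dᵢ(p) = ⟨wᵢ, p - p^ur⟩`. In the eigenbasis of `G`, `Π(p) = ∑ μᵢ (mᵢ² - dᵢ(p)²)` and
`V(p) = ½ ∑ (μᵢ (mᵢ - dᵢ(p)))²`. Optimality of `p*` against the neutral price `p̃` bounds the loss
`∑ μᵢ dᵢ(p*)²` by that of `p̃`; since `d₀(p̃) = 0`, only the eigenvalues `λᵢ < λ₀` enter, so the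
loss is `o(μ₀)` as `δ → 1/λ₀`. Since `m₀ > 0`, the reference values `Π(p^ur) ≥ μ₀ m₀²` and
`2 V(p^ur) ≥ (μ₀ m₀)²` dominate it: directly for `Π`, and for `V` through the triangle inequality
in `ℓ²` together with `∑ (μᵢ dᵢ)² ≤ μ₀ ∑ μᵢ dᵢ²`.
-/

open Matrix

open Filter Topology

namespace Matrix

variable {ι R : Type*} [Fintype ι] [DecidableEq ι] [CommSemiring R]

theorem dotProduct_transpose_diagonal_mul_mulVec (W : Matrix ι ι R) (d u v : ι → R) :
    u ⬝ᵥ ((Wᵀ * diagonal d * W) *ᵥ v) = ∑ i, d i * (W *ᵥ u) i * (W *ᵥ v) i := by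
  rw [← mulVec_mulVec, ← mulVec_mulVec, dotProduct_mulVec, vecMul_transpose, dotProduct]
  exact Finset.sum_congr rfl fun i _ => by rw [mulVec_diagonal]; ring

theorem of_mul_transpose_eq_one {w : ι → ι → R}
    (horth : ∀ i j, w i ⬝ᵥ w j = if i = j then (1 : R) else 0) : of w * (of w)ᵀ = 1 := by
  ext i j
  simpa [mul_apply, one_apply, dotProduct] using horth i j

end Matrix

theorem sub_eq_half_add_sub_pUR {n : ℕ} (a c p : Fin n → ℝ) :
    p - c = (1 / 2 : ℝ) • (a - c) + (p - pUR a c) := by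
  ext k
  simp only [pUR, Pi.add_apply, Pi.sub_apply, Pi.smul_apply, smul_eq_mul]
  ring

theorem sub_eq_half_sub_sub_pUR {n : ℕ} (a c p : Fin n → ℝ) :
    a - p = (1 / 2 : ℝ) • (a - c) - (p - pUR a c) := by
  ext k
  simp only [pUR, Pi.add_apply, Pi.sub_apply, Pi.smul_apply, smul_eq_mul]
  ring

section Spectral

variable {n : ℕ} {G : Matrix (Fin n) (Fin n) ℝ} {w : Fin n → Fin n → ℝ} {lam : Fin n → ℝ}

theorem Hmat_eq_spectral (horth : ∀ i j, w i ⬝ᵥ w j = if i = j then (1 : ℝ) else 0)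
    (heig : ∀ i, G *ᵥ w i = lam i • w i) {δ : ℝ} (hν : ∀ i, 1 - δ * lam i ≠ 0) :
    Hmat G δ = (of w)ᵀ * diagonal (fun i => (1 - δ * lam i)⁻¹) * of w := by
  have hGW : G * (of w)ᵀ = (of w)ᵀ * diagonal lam := by
    ext k i
    rw [mul_diagonal, mul_apply]
    simpa [mulVec, dotProduct, mul_comm] using congrFun (heig i) k
  have hsub : (1 - δ • G) * (of w)ᵀ = (of w)ᵀ * diagonal (fun i => 1 - δ * lam i) := by
    have hdiag : diagonal (fun i => 1 - δ * lam i) = 1 - δ • diagonal lam := by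
      rw [← diagonal_one, ← diagonal_smul, diagonal_sub]
      rfl
    rw [hdiag, Matrix.mul_sub, Matrix.mul_smul, ← hGW, sub_mul, Matrix.smul_mul, Matrix.one_mul,
      Matrix.mul_one]
  refine inv_eq_right_inv ?_
  rw [← Matrix.mul_assoc, ← Matrix.mul_assoc, hsub, Matrix.mul_assoc (of w)ᵀ,
    diagonal_mul_diagonal]
  simp only [mul_inv_cancel₀ (hν _), diagonal_one, Matrix.mul_one]
  exact mul_eq_one_comm.mp (of_mul_transpose_eq_one horth)

theorem profit_eq_sum (horth : ∀ i j, w i ⬝ᵥ w j = if i = j then (1 : ℝ) else 0)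
    (heig : ∀ i, G *ᵥ w i = lam i • w i) {δ : ℝ} (hν : ∀ i, 1 - δ * lam i ≠ 0)
    (a c p : Fin n → ℝ) :
    profit G δ a c p = ∑ i, (1 - δ * lam i)⁻¹ *
      ((of w *ᵥ ((1 / 2 : ℝ) • (a - c))) i ^ 2 - (of w *ᵥ (p - pUR a c)) i ^ 2) := by
  rw [profit, Hmat_eq_spectral horth heig hν, dotProduct_transpose_diagonal_mul_mulVec,
    sub_eq_half_add_sub_pUR a c p, sub_eq_half_sub_sub_pUR a c p,
    mulVec_add _ ((1 / 2 : ℝ) • (a - c)), mulVec_sub _ ((1 / 2 : ℝ) • (a - c))]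
  exact Finset.sum_congr rfl fun i _ => by simp only [Pi.add_apply, Pi.sub_apply]; ring

theorem surplus_eq_sum (horth : ∀ i j, w i ⬝ᵥ w j = if i = j then (1 : ℝ) else 0)
    (heig : ∀ i, G *ᵥ w i = lam i • w i) {δ : ℝ} (hν : ∀ i, 1 - δ * lam i ≠ 0)
    (a c p : Fin n → ℝ) :
    surplus G δ a p = (1 / 2 : ℝ) * ∑ i, ((1 - δ * lam i)⁻¹ *
      ((of w *ᵥ ((1 / 2 : ℝ) • (a - c))) i - (of w *ᵥ (p - pUR a c)) i)) ^ 2 := by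
  have hH2 : Hmat G δ * Hmat G δ
      = (of w)ᵀ * diagonal (fun i => (1 - δ * lam i)⁻¹ * (1 - δ * lam i)⁻¹) * of w := by
    rw [Hmat_eq_spectral horth heig hν, ← diagonal_mul_diagonal]
    simp only [Matrix.mul_assoc]
    rw [← Matrix.mul_assoc (of w), of_mul_transpose_eq_one horth, Matrix.one_mul]
  rw [surplus, hH2, dotProduct_transpose_diagonal_mul_mulVec, sub_eq_half_sub_sub_pUR a c p,
    mulVec_sub _ ((1 / 2 : ℝ) • (a - c))]
  exact congrArg _ <| Finset.sum_congr rfl fun i _ => by simp only [Pi.sub_apply]; ring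

end Spectral

theorem tendsto_norm_sub_div_norm_nhds_one {α E : Type*} [NormedAddCommGroup E] {l : Filter α}
    {x y : α → E} (hx : ∀ᶠ t in l, x t ≠ 0) (hy : Tendsto (fun t => ‖y t‖ / ‖x t‖) l (𝓝 0)) :
    Tendsto (fun t => ‖x t - y t‖ / ‖x t‖) l (𝓝 1) := by
  rw [tendsto_iff_norm_sub_tendsto_zero]
  refine squeeze_zero' (Eventually.of_forall fun _ => norm_nonneg _) ?_ hy
  filter_upwards [hx] with t ht
  have hpos : 0 < ‖x t‖ := norm_pos_iff.2 ht
  rw [Real.norm_eq_abs, div_sub_one hpos.ne', abs_div, abs_of_pos hpos]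
  gcongr
  simpa using abs_norm_sub_norm_le (x t - y t) (x t)

section WeightedRatio

variable {α ι : Type*} [Fintype ι] {l : Filter α} {μ d : α → ι → ℝ} {m : ι → ℝ} {i₀ : ι}

theorem tendsto_sum_mul_sq_sub_sq_div_sum_mul_sq (hμ : ∀ᶠ t in l, ∀ i, 0 < μ t i ∧ μ t i ≤ μ t i₀)
    (hm : m i₀ ≠ 0) (hd : Tendsto (fun t => (∑ i, μ t i * d t i ^ 2) / μ t i₀) l (𝓝 0)) :
    Tendsto (fun t => (∑ i, μ t i * (m i ^ 2 - d t i ^ 2)) / ∑ i, μ t i * m i ^ 2) l (𝓝 1) := by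
  have hbounds : ∀ᶠ t in l, 0 ≤ ∑ i, μ t i * d t i ^ 2 ∧ 0 < μ t i₀ * m i₀ ^ 2 ∧
      μ t i₀ * m i₀ ^ 2 ≤ ∑ i, μ t i * m i ^ 2 := by
    filter_upwards [hμ] with t ht
    have hnn : ∀ (f : ι → ℝ) i, 0 ≤ μ t i * f i ^ 2 := fun f i =>
      mul_nonneg (ht i).1.le (sq_nonneg _)
    exact ⟨Finset.sum_nonneg fun i _ => hnn _ i, mul_pos (ht i₀).1 (by positivity),
      Finset.single_le_sum (f := fun i => μ t i * m i ^ 2) (fun i _ => hnn m i)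
        (Finset.mem_univ i₀)⟩
  have hloss : Tendsto (fun t => (∑ i, μ t i * d t i ^ 2) / ∑ i, μ t i * m i ^ 2) l (𝓝 0) := by
    refine squeeze_zero' ?_ ?_ (by simpa using hd.div_const (m i₀ ^ 2))
    · filter_upwards [hbounds] with t ⟨hD, h₀, hA⟩
      exact div_nonneg hD (h₀.trans_le hA).le
    · filter_upwards [hbounds] with t ⟨hD, h₀, hA⟩
      rw [div_div]
      exact div_le_div_of_nonneg_left hD h₀ hA
  have hlim : Tendsto (fun t => 1 - (∑ i, μ t i * d t i ^ 2) / ∑ i, μ t i * m i ^ 2) l (𝓝 1) := by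
    simpa using tendsto_const_nhds.sub hloss
  refine hlim.congr' ?_
  filter_upwards [hbounds] with t ⟨_, h₀, hA⟩
  simp only [mul_sub, Finset.sum_sub_distrib]
  rw [sub_div, div_self (h₀.trans_le hA).ne']

theorem tendsto_sum_mul_sub_sq_div_sum_mul_sq (hμ : ∀ᶠ t in l, ∀ i, 0 < μ t i ∧ μ t i ≤ μ t i₀)
    (hm : m i₀ ≠ 0) (hd : Tendsto (fun t => (∑ i, μ t i * d t i ^ 2) / μ t i₀) l (𝓝 0)) :
    Tendsto (fun t => (∑ i, (μ t i * (m i - d t i)) ^ 2) / ∑ i, (μ t i * m i) ^ 2) l (𝓝 1) := by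
  set x : α → EuclideanSpace ℝ ι := fun t => WithLp.toLp 2 fun i => μ t i * m i
  set y : α → EuclideanSpace ℝ ι := fun t => WithLp.toLp 2 fun i => μ t i * d t i
  have hx : ∀ᶠ t in l, x t ≠ 0 := by
    filter_upwards [hμ] with t ht hxt
    exact mul_ne_zero (ht i₀).1.ne' hm (congrArg (fun v => v.ofLp i₀) hxt)
  have hy : Tendsto (fun t => ‖y t‖ / ‖x t‖) l (𝓝 0) := by
    have hsqrt := (Real.continuous_sqrt.tendsto _).comp (hd.div_const (m i₀ ^ 2))
    rw [zero_div, Real.sqrt_zero] at hsqrt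
    refine squeeze_zero' (Eventually.of_forall fun _ => by positivity) ?_ hsqrt
    filter_upwards [hμ] with t ht
    have hD : 0 ≤ ∑ i, μ t i * d t i ^ 2 :=
      Finset.sum_nonneg fun i _ => mul_nonneg (ht i).1.le (sq_nonneg _)
    have hμ₀ := (ht i₀).1
    have hx₀ : (μ t i₀ * m i₀) ^ 2 ≤ ‖x t‖ ^ 2 := by
      rw [EuclideanSpace.real_norm_sq_eq]
      exact Finset.single_le_sum (f := fun i => (μ t i * m i) ^ 2)
        (fun i _ => sq_nonneg _) (Finset.mem_univ i₀)
    have hy₀ : ‖y t‖ ^ 2 ≤ μ t i₀ * ∑ i, μ t i * d t i ^ 2 := by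
      rw [EuclideanSpace.real_norm_sq_eq, Finset.mul_sum]
      refine Finset.sum_le_sum fun i _ => ?_
      calc (μ t i * d t i) ^ 2 = μ t i * (μ t i * d t i ^ 2) := by ring
        _ ≤ μ t i₀ * (μ t i * d t i ^ 2) :=
          mul_le_mul_of_nonneg_right (ht i).2 (mul_nonneg (ht i).1.le (sq_nonneg _))
    rw [Function.comp_apply, Real.le_sqrt (by positivity) (by positivity), div_pow]
    calc ‖y t‖ ^ 2 / ‖x t‖ ^ 2 ≤ μ t i₀ * (∑ i, μ t i * d t i ^ 2) / (μ t i₀ * m i₀) ^ 2 :=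
          div_le_div₀ (by positivity) hy₀ (by positivity) hx₀
      _ = (∑ i, μ t i * d t i ^ 2) / μ t i₀ / m i₀ ^ 2 := by field_simp
  have hlim := (tendsto_norm_sub_div_norm_nhds_one hx hy).pow 2
  rw [one_pow] at hlim
  refine hlim.congr fun t => ?_
  simp only [div_pow, EuclideanSpace.real_norm_sq_eq, WithLp.ofLp_sub, Pi.sub_apply,
    x, y, mul_sub]

end WeightedRatio

section SpectralGap

variable {ι : Type*} {lam : ι → ℝ} {i₀ : ι}

theorem inv_one_sub_mul_pos_le (hlam : 0 < lam i₀) (hgap : ∀ i, i ≠ i₀ → lam i < lam i₀)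
    {δ : ℝ} (hδ : δ ∈ Set.Ico 0 (1 / lam i₀)) (i : ι) :
    0 < (1 - δ * lam i)⁻¹ ∧ (1 - δ * lam i)⁻¹ ≤ (1 - δ * lam i₀)⁻¹ := by
  have h₀ : 0 < 1 - δ * lam i₀ := by
    have := (lt_div_iff₀ hlam).1 hδ.2
    linarith
  have hle : lam i ≤ lam i₀ := (eq_or_ne i i₀).elim (fun h => h ▸ le_rfl) fun h => (hgap i h).le
  have hi : δ * lam i ≤ δ * lam i₀ := mul_le_mul_of_nonneg_left hle hδ.1
  exact ⟨inv_pos.2 (by linarith), inv_anti₀ h₀ (by linarith)⟩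

theorem one_sub_mul_ne_zero (hlam : 0 < lam i₀) (hgap : ∀ i, i ≠ i₀ → lam i < lam i₀)
    {δ : ℝ} (hδ : δ ∈ Set.Ico 0 (1 / lam i₀)) (i : ι) : 1 - δ * lam i ≠ 0 :=
  (inv_pos.1 (inv_one_sub_mul_pos_le hlam hgap hδ i).1).ne'

theorem tendsto_sum_inv_one_sub_mul_div [Fintype ι] (hlam : 0 < lam i₀)
    (hgap : ∀ i, i ≠ i₀ → lam i < lam i₀) {e : ι → ℝ} (he : e i₀ = 0) :
    Tendsto (fun δ => (∑ i, (1 - δ * lam i)⁻¹ * e i ^ 2) / (1 - δ * lam i₀)⁻¹)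
      (𝓝 (1 / lam i₀)) (𝓝 0) := by
  have hnum : Tendsto (fun δ => 1 - δ * lam i₀) (𝓝 (1 / lam i₀)) (𝓝 0) := by
    have := (by fun_prop : Continuous fun δ : ℝ => 1 - δ * lam i₀).tendsto (1 / lam i₀)
    rwa [one_div_mul_cancel hlam.ne', sub_self] at this
  have hterm : ∀ i, Tendsto (fun δ => (1 - δ * lam i₀) / (1 - δ * lam i) * e i ^ 2)
      (𝓝 (1 / lam i₀)) (𝓝 0) := by
    intro i
    rcases eq_or_ne i i₀ with rfl | hi
    · simp [he]
    have hden : 1 - 1 / lam i₀ * lam i ≠ 0 := by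
      rw [one_div_mul_eq_div]
      exact sub_ne_zero.2 ((div_lt_one hlam).2 (hgap i hi)).ne'
    have := (hnum.div ((by fun_prop : Continuous fun δ : ℝ => 1 - δ * lam i).tendsto _)
      hden).mul_const (e i ^ 2)
    rwa [zero_div, zero_mul] at this
  have hsum := tendsto_finsetSum Finset.univ fun i _ => hterm i
  rw [Finset.sum_const_zero] at hsum
  refine hsum.congr fun δ => ?_
  rw [Finset.sum_div]
  exact Finset.sum_congr rfl fun i _ => by rw [div_inv_eq_mul]; ring

end SpectralGap

theorem tendsto_optimal_profit_loss_div {n : ℕ} [NeZero n] {G : Matrix (Fin n) (Fin n) ℝ}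
    {w : Fin n → Fin n → ℝ} {lam : Fin n → ℝ}
    (horth : ∀ i j, w i ⬝ᵥ w j = if i = j then (1 : ℝ) else 0)
    (heig : ∀ i, G *ᵥ w i = lam i • w i) (hgap : ∀ i, i ≠ 0 → lam i < lam 0) (hlam0 : 0 < lam 0)
    {a c : Fin n → ℝ} {K : Set (Fin n → ℝ)} {pstar : ℝ → Fin n → ℝ}
    (hps : ∀ δ ∈ Set.Ico (0 : ℝ) (1 / lam 0), ∀ q ∈ K, profit G δ a c q ≤ profit G δ a c (pstar δ))
    {pt : Fin n → ℝ} (hptK : pt ∈ K) (hpt : w 0 ⬝ᵥ pt = w 0 ⬝ᵥ pUR a c) :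
    Tendsto (fun δ => (∑ i, (1 - δ * lam i)⁻¹ * (of w *ᵥ (pstar δ - pUR a c)) i ^ 2) /
      (1 - δ * lam 0)⁻¹) (𝓝[Set.Ico 0 (1 / lam 0)] (1 / lam 0)) (𝓝 0) := by
  have hpt0 : (of w *ᵥ (pt - pUR a c)) 0 = 0 := by
    simp only [mulVec, of_apply]
    rw [dotProduct_sub, hpt, sub_self]
  refine squeeze_zero' ?_ ?_
    ((tendsto_sum_inv_one_sub_mul_div hlam0 hgap hpt0).mono_left nhdsWithin_le_nhds)
  · filter_upwards [eventually_mem_nhdsWithin] with δ hδ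
    have hμ := inv_one_sub_mul_pos_le hlam0 hgap hδ
    exact div_nonneg (Finset.sum_nonneg fun i _ => mul_nonneg (hμ i).1.le (sq_nonneg _))
      (hμ 0).1.le
  · filter_upwards [eventually_mem_nhdsWithin] with δ hδ
    have hν := one_sub_mul_ne_zero hlam0 hgap hδ
    have hopt := hps δ hδ pt hptK
    rw [profit_eq_sum horth heig hν, profit_eq_sum horth heig hν] at hopt
    simp only [mul_sub, Finset.sum_sub_distrib] at hopt
    exact div_le_div_of_nonneg_right (by linarith) (inv_one_sub_mul_pos_le hlam0 hgap hδ 0).1.le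

theorem stmt10_general {n : ℕ} [NeZero n]
    (G : Matrix (Fin n) (Fin n) ℝ)
    (w : Fin n → Fin n → ℝ) (lam : Fin n → ℝ)
    (horth : ∀ i j, w i ⬝ᵥ w j = if i = j then (1 : ℝ) else 0)
    (heig : ∀ i, G *ᵥ w i = lam i • w i)
    (hgap : ∀ i, i ≠ 0 → lam i < lam 0)
    (hlam0 : 0 < lam 0)
    (hw0 : ∀ k, 0 < w 0 k)
    (a c : Fin n → ℝ) (hac : ∀ i, c i < a i)
    (K : Set (Fin n → ℝ))
    (pstar : ℝ → Fin n → ℝ)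
    (hps : ∀ δ ∈ Set.Ico (0 : ℝ) (1 / lam 0),
      pstar δ ∈ K ∧ ∀ q ∈ K, profit G δ a c q ≤ profit G δ a c (pstar δ))
    (hneutral : ∃ pt ∈ K, w 0 ⬝ᵥ pt = w 0 ⬝ᵥ pUR a c) :
    Filter.Tendsto (fun δ : ℝ => Rpi G δ a c (pstar δ))
      (nhdsWithin (1 / lam 0) (Set.Ico 0 (1 / lam 0))) (nhds 1) ∧
    Filter.Tendsto (fun δ : ℝ => Rv G δ a c (pstar δ))
      (nhdsWithin (1 / lam 0) (Set.Ico 0 (1 / lam 0))) (nhds 1) := by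
  obtain ⟨pt, hptK, hpt⟩ := hneutral
  have hμ : ∀ᶠ δ in 𝓝[Set.Ico 0 (1 / lam 0)] (1 / lam 0), ∀ i,
      0 < (1 - δ * lam i)⁻¹ ∧ (1 - δ * lam i)⁻¹ ≤ (1 - δ * lam 0)⁻¹ :=
    eventually_mem_nhdsWithin.mono fun δ hδ => inv_one_sub_mul_pos_le hlam0 hgap hδ
  have hm : (of w *ᵥ ((1 / 2 : ℝ) • (a - c))) 0 ≠ 0 := by
    refine (Finset.sum_pos (fun k _ => mul_pos (hw0 k) ?_) Finset.univ_nonempty).ne'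
    simpa using hac k
  have hd := tendsto_optimal_profit_loss_div horth heig hgap hlam0 (fun δ hδ => (hps δ hδ).2)
    hptK hpt
  constructor
  · refine (tendsto_sum_mul_sq_sub_sq_div_sum_mul_sq hμ hm hd).congr' ?_
    filter_upwards [eventually_mem_nhdsWithin] with δ hδ
    have hν := one_sub_mul_ne_zero hlam0 hgap hδ
    rw [Rpi, profit_eq_sum horth heig hν, profit_eq_sum horth heig hν]
    simp
  · refine (tendsto_sum_mul_sub_sq_div_sum_mul_sq hμ hm hd).congr' ?_
    filter_upwards [eventually_mem_nhdsWithin] with δ hδ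
    have hν := one_sub_mul_ne_zero hlam0 hgap hδ
    rw [Rv, surplus_eq_sum horth heig hν a c, surplus_eq_sum horth heig hν a c,
      mul_div_mul_left _ _ (by norm_num)]
    simp

theorem stmt10 {n : ℕ} [NeZero n]
    (G : Matrix (Fin n) (Fin n) ℝ) (hGsym : G.IsSymm)
    (hGnn : ∀ i j, 0 ≤ G i j) (hGdiag : ∀ i, G i i = 0)
    (w : Fin n → Fin n → ℝ) (lam : Fin n → ℝ)
    (horth : ∀ i j, w i ⬝ᵥ w j = if i = j then (1 : ℝ) else 0)
    (heig : ∀ i, G *ᵥ w i = lam i • w i)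
    (hgap : ∀ i, i ≠ 0 → lam i < lam 0)
    (hlam0 : 0 < lam 0)
    (hw0 : ∀ k, 0 < w 0 k)
    (hpd : ∀ δ ∈ Set.Ico (0 : ℝ) (1 / lam 0), (Hmat G δ).PosDef)
    (a c : Fin n → ℝ) (hac : ∀ i, c i < a i)
    (K : Set (Fin n → ℝ)) (hKne : K.Nonempty) (hKcl : IsClosed K) (hKconv : Convex ℝ K)
    (pstar : ℝ → Fin n → ℝ)
    (hps : ∀ δ ∈ Set.Ico (0 : ℝ) (1 / lam 0),
      pstar δ ∈ K ∧ ∀ q ∈ K, profit G δ a c q ≤ profit G δ a c (pstar δ))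
    (hneutral : ∃ pt ∈ K, w 0 ⬝ᵥ pt = w 0 ⬝ᵥ pUR a c) :
    Filter.Tendsto (fun δ : ℝ => Rpi G δ a c (pstar δ))
      (nhdsWithin (1 / lam 0) (Set.Ico 0 (1 / lam 0))) (nhds 1) ∧
    Filter.Tendsto (fun δ : ℝ => Rv G δ a c (pstar δ))
      (nhdsWithin (1 / lam 0) (Set.Ico 0 (1 / lam 0))) (nhds 1) :=
  stmt10_general G w lam horth heig hgap hlam0 hw0 a c hac K pstar hps hneutral
end
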